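/- arXiv:2603.15345 — 4 statements merged into one kernel-verified Lean document; each statement's English description precedes it below -/
import Mathlib

section
/- For x ∈ ℝ^n and 1 ≤ k ≤ n, the sum over i of x_i^2·s_{k-1}(x|i) equals s_1(x)·s_k(x) − (k+1)·s_{k+1}(x). -/
/-!
Deleting the coordinate `i` splits the `(k+1)`-subsets according to whether they contain `i`:
`s_{k+1}(x) = x_i s_k(x|i) + s_{k+1}(x|i)`. Counting each `(k+1)`-subset once for each of its
elements gives `∑ᵢ x_i s_k(x|i) = (k+1) s_{k+1}(x)`. Hence
`∑ᵢ x_i² s_{k-1}(x|i) = ∑ᵢ x_i (s_k(x) - s_k(x|i)) = s_1(x) s_k(x) - (k+1) s_{k+1}(x)`.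
-/

open Finset

/-- The `k`-th elementary symmetric polynomial of `x ∈ ℝⁿ`. -/
noncomputable def esymm (n k : ℕ) (x : Fin n → ℝ) : ℝ :=
  ∑ A ∈ Finset.powersetCard k (Finset.univ : Finset (Fin n)), ∏ i ∈ A, x i

/-- The Gårding cone `Γₖⁿ = {x : sₗ(x) > 0, l = 1,…,k}`. -/
def GammaK (n k : ℕ) (x : Fin n → ℝ) : Prop :=
  ∀ l, 1 ≤ l → l ≤ k → 0 < esymm n l x

namespace Finset

variable {ι R : Type*}

section Powerset

variable [DecidableEq ι]

theorem filter_notMem_powersetCard (s : Finset ι) (a : ι) (k : ℕ) :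
    (powersetCard k s).filter (a ∉ ·) = powersetCard k (s.erase a) := by
  ext A
  simp only [mem_filter, mem_powersetCard, subset_erase]
  tauto

theorem filter_mem_powersetCard_succ {s : Finset ι} {a : ι} (ha : a ∈ s) (k : ℕ) :
    (powersetCard (k + 1) s).filter (a ∈ ·) =
      (powersetCard k (s.erase a)).image (insert a) := by
  ext B
  simp only [mem_filter, mem_powersetCard, mem_image, subset_erase]
  constructor
  · rintro ⟨⟨hBs, hB⟩, haB⟩
    refine ⟨B.erase a, ⟨⟨(erase_subset a B).trans hBs, notMem_erase a B⟩, ?_⟩,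
      insert_erase haB⟩
    rw [card_erase_of_mem haB, hB, Nat.add_sub_cancel]
  · rintro ⟨A, ⟨⟨hAs, haA⟩, hA⟩, rfl⟩
    exact ⟨⟨insert_subset ha hAs, by rw [card_insert_of_notMem haA, hA]⟩,
      mem_insert_self a A⟩

end Powerset

/-- `s_k` of the values of `f` on `s`; thus `esymmOn (univ.erase i) k x` is `s_k(x|i)`. -/
def esymmOn [CommSemiring R] (s : Finset ι) (k : ℕ) (f : ι → R) : R :=
  ∑ A ∈ powersetCard k s, ∏ j ∈ A, f j

variable [CommSemiring R] (f : ι → R)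

theorem esymmOn_one (s : Finset ι) : esymmOn s 1 f = ∑ a ∈ s, f a := by
  simp [esymmOn, powersetCard_one]

variable [DecidableEq ι]

theorem sum_filter_mem_powersetCard_succ_prod {s : Finset ι} {a : ι} (ha : a ∈ s) (k : ℕ) :
    ∑ B ∈ (powersetCard (k + 1) s).filter (a ∈ ·), ∏ j ∈ B, f j =
      f a * esymmOn (s.erase a) k f := by
  have haA : ∀ A ∈ powersetCard k (s.erase a), a ∉ A := fun A hA =>
    notMem_mono (mem_powersetCard.1 hA).1 (notMem_erase a s)
  rw [filter_mem_powersetCard_succ ha, sum_image, esymmOn, mul_sum]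
  · exact sum_congr rfl fun A hA => prod_insert (haA A hA)
  · intro A hA A' hA' h
    rw [← erase_insert (haA A hA), ← erase_insert (haA A' hA'), h]

theorem esymmOn_succ_eq_of_mem {s : Finset ι} {a : ι} (ha : a ∈ s) (k : ℕ) :
    esymmOn s (k + 1) f = f a * esymmOn (s.erase a) k f + esymmOn (s.erase a) (k + 1) f := by
  rw [esymmOn, ← sum_filter_add_sum_filter_not _ (a ∈ ·),
    sum_filter_mem_powersetCard_succ_prod f ha, filter_notMem_powersetCard]
  rfl

theorem sum_mul_esymmOn_erase (s : Finset ι) (k : ℕ) :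
    ∑ a ∈ s, f a * esymmOn (s.erase a) k f = (k + 1) • esymmOn s (k + 1) f := by
  calc ∑ a ∈ s, f a * esymmOn (s.erase a) k f
      = ∑ a ∈ s, ∑ B ∈ (powersetCard (k + 1) s).filter (a ∈ ·), ∏ j ∈ B, f j :=
        sum_congr rfl fun a ha => (sum_filter_mem_powersetCard_succ_prod f ha k).symm
    _ = ∑ B ∈ powersetCard (k + 1) s, ∑ _a ∈ B, ∏ j ∈ B, f j := by
        refine sum_comm' fun a B => ?_
        simp only [mem_filter, mem_powersetCard]
        exact ⟨fun h => ⟨h.2.2, h.2.1⟩, fun h => ⟨h.2.1 h.1, h.2, h.1⟩⟩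
    _ = (k + 1) • esymmOn s (k + 1) f := by
        rw [esymmOn, smul_sum]
        refine sum_congr rfl fun B hB => ?_
        rw [sum_const, (mem_powersetCard.1 hB).2]

theorem esymmOn_update_zero (s : Finset ι) (a : ι) (k : ℕ) :
    esymmOn s k (Function.update f a 0) = esymmOn (s.erase a) k f := by
  rw [esymmOn, ← sum_filter_add_sum_filter_not _ (a ∈ ·), filter_notMem_powersetCard,
    sum_eq_zero fun A hA => prod_eq_zero (mem_filter.1 hA).2 (Function.update_self a 0 f), zero_add]
  refine sum_congr rfl fun A hA => prod_congr rfl fun j hj => Function.update_of_ne ?_ _ _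
  exact ne_of_mem_erase ((mem_powersetCard.1 hA).1 hj)

end Finset

theorem esymm_sum_sq_update_general (n k : ℕ) (hk : 1 ≤ k) (x : Fin n → ℝ) :
    (∑ i : Fin n, (x i) ^ 2 * esymm n (k - 1) (Function.update x i 0)) =
      esymm n 1 x * esymm n k x - ((k : ℝ) + 1) * esymm n (k + 1) x := by
  obtain ⟨m, rfl⟩ := Nat.exists_eq_add_of_le' hk
  have hesymm : ∀ j y, esymm n j y = esymmOn univ j y := fun _ _ => rfl
  simp only [hesymm, Nat.add_sub_cancel, esymmOn_update_zero]
  calc ∑ i, x i ^ 2 * esymmOn (univ.erase i) m x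
      = ∑ i, (x i * esymmOn univ (m + 1) x - x i * esymmOn (univ.erase i) (m + 1) x) := by
        refine sum_congr rfl fun i _ => ?_
        rw [esymmOn_succ_eq_of_mem x (mem_univ i)]
        ring
    _ = esymmOn univ 1 x * esymmOn univ (m + 1) x -
          ((m + 1 : ℕ) + 1) * esymmOn univ (m + 1 + 1) x := by
        rw [sum_sub_distrib, ← sum_mul, ← esymmOn_one, sum_mul_esymmOn_erase, nsmul_eq_mul]
        push_cast
        ring

/-- ∑ᵢ xᵢ²·s_{k-1}(x|i) = s₁(x)·s_k(x) − (k+1)·s_{k+1}(x). -/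
theorem esymm_sum_sq_update (n k : ℕ) (hk : 1 ≤ k) (hkn : k ≤ n) (x : Fin n → ℝ) :
    (∑ i : Fin n, (x i) ^ 2 * esymm n (k - 1) (Function.update x i 0)) =
      esymm n 1 x * esymm n k x - ((k : ℝ) + 1) * esymm n (k + 1) x :=
  esymm_sum_sq_update_general n k hk x
end

section
/- If x ∈ Γ_k^n (i.e., s_j(x) > 0 for all j = 1,...,k) and x_1 ≥ x_2 ≥ ... ≥ x_n, then x_1 · s_{k-1}(x|1) ≥ (k/n)·s_k(x). -/
/-!
Write the decreasing vector `x` as the multiset `x₁ ::ₘ t` of its coordinates, so that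
`s_k(x) = x₁ s_{k-1}(t) + s_k(t)` and the claim reads `k s_k(t) ≤ (n - k) x₁ s_{k-1}(t)`.

The key input is Gårding's fact that deleting a coordinate maps `Γ_{k+1}` into `Γ_k`. By induction on
`k`: if `s_k(t) ≤ 0`, shift every coordinate by the constant `c ≥ 0` that makes `s_k(t + c)`
vanish; the cone is stable under such shifts, so `s_{k+1}(t + c) = s_{k+1}(x + c) > 0` and
`s_{k-1}(t + c) > 0`, against Newton's inequality `s_k² ≥ c' s_{k-1} s_{k+1}`. Newton's inequality
reduces, by Rolle's theorem applied to `∏ (X - tᵢ)`, to the case of exactly `k + 1` variables,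
where it is the identity `s_k² - 2 s_{k+1} s_{k-1} = s_k(t²)`.

With that, Euler's identity `k s_k(t) = ∑_b b s_{k-1}(t ∖ b)`, the bounds `b ≤ x₁` and
`s_{k-1}(t ∖ b) > 0`, and `∑_b s_{k-1}(t ∖ b) = (n - k) s_{k-1}(t)` give the claim.
-/

open Finset

namespace Multiset

open Polynomial

section CommSemiring

variable {R : Type*} [CommSemiring R]

theorem esymm_zero (s : Multiset R) : s.esymm 0 = 1 := by
  simp [esymm]

theorem esymm_one (s : Multiset R) : s.esymm 1 = s.sum := by
  simp [esymm, powersetCard_one]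

theorem esymm_cons_succ (a : R) (s : Multiset R) (j : ℕ) :
    (a ::ₘ s).esymm (j + 1) = a * s.esymm j + s.esymm (j + 1) := by
  simp [esymm, powersetCard_cons, sum_map_mul_left, add_comm]

theorem esymm_zero_cons (s : Multiset R) (j : ℕ) : (0 ::ₘ s).esymm j = s.esymm j := by
  cases j with
  | zero => simp only [esymm_zero]
  | succ j => simp [esymm_cons_succ]

theorem esymm_eq_zero_of_card_lt {s : Multiset R} {j : ℕ} (h : card s < j) : s.esymm j = 0 := by
  simp [esymm, powersetCard_eq_empty _ h]

theorem esymm_card (s : Multiset R) : s.esymm (card s) = s.prod := by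
  simp [esymm, powersetCard_self]

theorem esymm_map_add_const (s : Multiset R) (c : R) {j : ℕ} (hj : j ≤ card s) :
    (s.map (· + c)).esymm j = ∑ m ∈ Finset.range (card s + 1),
      s.esymm m * (c ^ (card s - m - (card s - j)) * ((card s - m).choose (card s - j) : R)) := by
  have hcomp : ((s.map (· + c)).map fun a => X + C a).prod
      = ∑ m ∈ Finset.range (card s + 1), C (s.esymm m) * (X + C c) ^ (card s - m) := by
    have h := congrArg (·.comp (X + C c)) (prod_X_add_C_eq_sum_esymm s)
    simp only [multiset_prod_comp, map_map, Function.comp_def, add_comp, X_comp, C_comp,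
      Polynomial.sum_comp, mul_comp, pow_comp] at h
    rw [← h, map_map]
    congr 2
    funext a
    simp only [Function.comp_apply, C_add]
    ring
  have h := congrArg (coeff · (card s - j)) hcomp
  simp only [finsetSum_coeff, coeff_C_mul, coeff_X_add_C_pow] at h
  rwa [prod_X_add_C_coeff _ (by simp), card_map, Nat.sub_sub_self hj] at h

theorem sum_map_esymm_erase [DecidableEq R] (s : Multiset R) (j : ℕ) :
    (s.map fun b => (s.erase b).esymm j).sum = (card s - j : ℕ) * s.esymm j := by
  rcases lt_or_ge j (card s) with hj | hj
  · have h := congrArg (coeff · (card s - 1 - j))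
      (derivative_prod (s := s) (f := fun b => X + C b))
    simp only [derivative_X_add_C, mul_one, ← lcoeff_apply, map_multiset_sum, map_map,
      Function.comp_def] at h
    simp only [lcoeff_apply, coeff_derivative] at h
    rw [← Nat.cast_add_one, show card s - 1 - j + 1 = card s - j by omega,
      prod_X_add_C_coeff _ (by omega), Nat.sub_sub_self hj.le, mul_comm] at h
    rw [h]
    refine congrArg sum (map_congr rfl fun b hb => ?_)
    have hcard : card (s.erase b) = card s - 1 := by
      rw [card_erase_of_mem hb, Nat.pred_eq_sub_one]
    rw [prod_X_add_C_coeff _ (by omega), hcard, Nat.sub_sub_self (by omega)]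
  · rw [Nat.sub_eq_zero_of_le hj, Nat.cast_zero, zero_mul]
    refine Multiset.sum_eq_zero fun b hb => ?_
    obtain ⟨a, ha, rfl⟩ := mem_map.mp hb
    have hcard_pos := card_pos_iff_exists_mem.mpr ⟨a, ha⟩
    exact esymm_eq_zero_of_card_lt (by rw [card_erase_of_mem ha, Nat.pred_eq_sub_one]; omega)

end CommSemiring

section CommRing

variable {R : Type*} [CommRing R]

theorem sum_map_mul_esymm_erase [DecidableEq R] (s : Multiset R) (j : ℕ) :
    (s.map fun b => b * (s.erase b).esymm j).sum = (j + 1) * s.esymm (j + 1) := by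
  have h : (s.map fun _ => s.esymm (j + 1)).sum
      = (s.map fun b => b * (s.erase b).esymm j).sum
        + (s.map fun b => (s.erase b).esymm (j + 1)).sum := by
    rw [← sum_map_add]
    refine congrArg sum (map_congr rfl fun b hb => ?_)
    conv_lhs => rw [← cons_erase hb]
    rw [esymm_cons_succ]
  rw [sum_map_esymm_erase, map_const', sum_replicate, nsmul_eq_mul] at h
  rcases le_or_gt (j + 1) (card s) with hj | hj
  · rw [Nat.cast_sub hj] at h
    push_cast at h
    linear_combination -h
  · rw [esymm_eq_zero_of_card_lt hj] at h ⊢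
    simpa using h.symm

theorem sq_esymm_sub_two_mul_esymm {k : ℕ} {s : Multiset R} (hs : card s = k + 2) :
    s.esymm (k + 1) ^ 2 - 2 * s.esymm (k + 2) * s.esymm k = (s.map (· ^ 2)).esymm (k + 1) := by
  induction k generalizing s with
  | zero =>
    obtain ⟨a, t, rfl, ht⟩ := card_eq_succ_iff.mp hs
    obtain ⟨b, rfl⟩ := card_eq_one.mp ht
    simp only [zero_add, map_cons, map_singleton, esymm_pair_one, esymm_pair_two, esymm_zero]
    ring
  | succ k ih =>
    obtain ⟨a, t, rfl, ht⟩ := card_eq_succ_iff.mp hs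
    have hprod : t.esymm (k + 2) = t.prod := by rw [← ht, esymm_card]
    have hprod_sq : (t.map (· ^ 2)).esymm (k + 2) = t.prod ^ 2 := by
      rw [← ht, ← card_map (· ^ 2) t, esymm_card, prod_map_pow, map_id']
    have hzero : t.esymm (k + 3) = 0 := esymm_eq_zero_of_card_lt (by omega)
    rw [map_cons, esymm_cons_succ, esymm_cons_succ, esymm_cons_succ, esymm_cons_succ, hprod,
      hprod_sq, hzero]
    linear_combination a ^ 2 * ih ht + 2 * a ^ 2 * t.esymm k * hprod

end CommRing

section Ordered

variable {R : Type*} [CommSemiring R] [PartialOrder R] [IsStrictOrderedRing R]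

theorem esymm_nonneg {s : Multiset R} (hs : ∀ a ∈ s, 0 ≤ a) (j : ℕ) : 0 ≤ s.esymm j :=
  sum_nonneg fun _ hp => by
    obtain ⟨u, hu, rfl⟩ := mem_map.mp hp
    exact prod_nonneg fun a ha => hs a (mem_of_le (mem_powersetCard.mp hu).1 ha)

theorem esymm_pos {s : Multiset R} (hs : ∀ a ∈ s, 0 < a) {j : ℕ} (hj : j ≤ card s) :
    0 < s.esymm j := by
  obtain ⟨u, hu⟩ := card_pos_iff_exists_mem.mp
    (by rw [card_powersetCard]; exact Nat.choose_pos hj : 0 < card (s.powersetCard j))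
  have hpos : ∀ v ∈ s.powersetCard j, 0 < v.prod := fun v hv =>
    prod_pos fun a ha => hs a (mem_of_le (mem_powersetCard.mp hv).1 ha)
  calc 0 < u.prod := hpos u hu
    _ ≤ s.esymm j := single_le_sum (fun _ hp => by
          obtain ⟨v, hv, rfl⟩ := mem_map.mp hp
          exact (hpos v hv).le) _ (mem_map_of_mem _ hu)

end Ordered

theorem _root_.Polynomial.card_roots_le_card_roots_iterate_derivative_add (p : ℝ[X]) (i : ℕ) :
    card p.roots ≤ card (derivative^[i] p).roots + i := by
  induction i with
  | zero => simp
  | succ i ih =>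
    rw [Function.iterate_succ_apply']
    have := card_roots_le_derivative (derivative^[i] p)
    omega

/-- The witness is the multiset of roots of the `(card s - k)`-th derivative of `∏ (X - a)`, all
real by Rolle's theorem. -/
theorem exists_card_eq_esymm_eq_pos_mul (s : Multiset ℝ) {k : ℕ} (hk : k ≤ card s) :
    ∃ r : Multiset ℝ, card r = k ∧ ∀ m ≤ k, ∃ c : ℝ, 0 < c ∧ r.esymm m = c * s.esymm m := by
  set n := card s
  set P := (s.map fun a => X - C a).prod
  have hP_deg : P.natDegree = n := natDegree_multiset_prod_X_sub_C_eq_card s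
  have hP_roots : P.roots = s := roots_multiset_prod_X_sub_C s
  have hP_lead : P.leadingCoeff = 1 :=
    monic_multiset_prod_of_monic _ _ fun a _ => monic_X_sub_C a
  set Q := derivative^[n - k] P
  have hQ_coeff : ∀ m ≤ k,
      Q.coeff (k - m) = (n - m).descFactorial (n - k) * ((-1) ^ m * s.esymm m) := by
    intro m hm
    rw [coeff_iterate_derivative, show k - m + (n - k) = n - m by omega, nsmul_eq_mul,
      coeff_eq_esymm_roots_of_card (by rw [hP_roots, hP_deg]) (by omega), hP_lead, hP_roots,
      hP_deg, Nat.sub_sub_self (by omega), one_mul]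
  have hQ_lead_coeff : Q.coeff k = n.descFactorial (n - k) := by
    simpa [esymm_zero] using hQ_coeff 0 (Nat.zero_le k)
  have hdesc_pos : ∀ m ≤ k, (0 : ℝ) < (n - m).descFactorial (n - k) := fun m hm => by
    exact_mod_cast Nat.descFactorial_pos.mpr (by omega)
  have hQ_deg : Q.natDegree = k := by
    refine le_antisymm ?_ (le_natDegree_of_ne_zero ?_)
    · exact (natDegree_iterate_derivative P (n - k)).trans (by omega)
    · rw [hQ_lead_coeff]
      simp [Nat.descFactorial_eq_zero_iff_lt]
  have hQ_card : card Q.roots = k := by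
    refine le_antisymm ((card_roots' Q).trans hQ_deg.le) ?_
    have h : card P.roots ≤ card Q.roots + (n - k) :=
      card_roots_le_card_roots_iterate_derivative_add P (n - k)
    rw [hP_roots] at h
    omega
  have hQ_lead : 0 < Q.leadingCoeff := by
    rw [leadingCoeff, hQ_deg, hQ_lead_coeff]
    exact_mod_cast Nat.descFactorial_pos.mpr (Nat.sub_le n k)
  refine ⟨Q.roots, hQ_card, fun m hm =>
    ⟨(n - m).descFactorial (n - k) / Q.leadingCoeff, div_pos (hdesc_pos m hm) hQ_lead, ?_⟩⟩
  have h := hQ_coeff m hm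
  rw [coeff_eq_esymm_roots_of_card (by rw [hQ_card, hQ_deg]) (by omega), hQ_deg,
    Nat.sub_sub_self hm] at h
  field_simp
  exact mul_left_cancel₀ (pow_ne_zero m (by norm_num : (-1 : ℝ) ≠ 0)) (by linear_combination h)

theorem esymm_add_two_nonpos {s : Multiset ℝ} {k : ℕ} (h₁ : s.esymm (k + 1) = 0)
    (h₀ : 0 < s.esymm k) : s.esymm (k + 2) ≤ 0 := by
  rcases lt_or_ge (card s) (k + 2) with hs | hs
  · exact (esymm_eq_zero_of_card_lt hs).le
  obtain ⟨r, hr, hrs⟩ := exists_card_eq_esymm_eq_pos_mul s hs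
  obtain ⟨c₀, hc₀, hr₀⟩ := hrs k (by omega)
  obtain ⟨c₁, -, hr₁⟩ := hrs (k + 1) (by omega)
  obtain ⟨c₂, hc₂, hr₂⟩ := hrs (k + 2) le_rfl
  have hnewton := sq_esymm_sub_two_mul_esymm hr
  have hsq := esymm_nonneg (s := r.map (· ^ 2)) (by simp [sq_nonneg]) (k + 1)
  rw [hr₁, h₁, mul_zero] at hnewton
  have hr_prod : r.esymm (k + 2) * r.esymm k ≤ 0 := by linarith
  rw [hr₀, hr₂] at hr_prod
  exact nonpos_of_mul_nonpos_right (nonpos_of_mul_nonpos_left hr_prod (mul_pos hc₀ h₀)) hc₂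

/-- `Γ_k`, on the multiset of coordinates; the condition for `l = 0` holds trivially. -/
def gardingCone (k : ℕ) : Set (Multiset ℝ) := {s | ∀ l ≤ k, 0 < s.esymm l}

theorem gardingCone_anti {k l : ℕ} (h : l ≤ k) : gardingCone k ⊆ gardingCone l :=
  fun _ hs m hm => hs m (hm.trans h)

theorem le_card_of_mem_gardingCone {s : Multiset ℝ} {k : ℕ} (hs : s ∈ gardingCone k) :
    k ≤ card s := by
  by_contra! h
  exact (hs k le_rfl).ne' (esymm_eq_zero_of_card_lt h)

theorem map_add_mem_gardingCone {s : Multiset ℝ} {k : ℕ} (hs : s ∈ gardingCone k) {c : ℝ}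
    (hc : 0 ≤ c) : s.map (· + c) ∈ gardingCone k := by
  intro l hl
  have hl_card : l ≤ card s := (le_card_of_mem_gardingCone hs).trans' hl
  rw [esymm_map_add_const s c hl_card]
  refine Finset.sum_pos' (fun m hm => ?_) ⟨l, Finset.mem_range.mpr (by omega), ?_⟩
  · rcases le_or_gt m l with hml | hml
    · exact mul_nonneg (hs m (hml.trans hl)).le (by positivity)
    · rw [Nat.choose_eq_zero_of_lt (by have := Finset.mem_range.mp hm; omega)]
      simp
  · simpa using hs l hl

theorem exists_esymm_map_add_eq_zero {s : Multiset ℝ} {j : ℕ} (hj : j ≤ card s)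
    (h : s.esymm j ≤ 0) : ∃ c, 0 ≤ c ∧ (s.map (· + c)).esymm j = 0 := by
  have hcont : Continuous fun c : ℝ => (s.map (· + c)).esymm j := by
    simp only [esymm_map_add_const s _ hj]
    fun_prop
  have habs : ∀ x ∈ s.map abs, 0 ≤ x := fun _ hx => by
    obtain ⟨y, -, rfl⟩ := mem_map.mp hx
    exact abs_nonneg y
  set C := (s.map abs).sum + 1
  have hC : 0 ≤ C := by linarith [sum_nonneg habs]
  have hC_pos : 0 < (s.map (· + C)).esymm j := by
    refine esymm_pos (fun b hb => ?_) (by rwa [card_map])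
    obtain ⟨a, ha, rfl⟩ := mem_map.mp hb
    linarith [neg_abs_le a, single_le_sum habs _ (mem_map_of_mem _ ha)]
  obtain ⟨c, hc, hc_zero⟩ := intermediate_value_Icc hC hcont.continuousOn
    ⟨by simpa using h, hC_pos.le⟩
  exact ⟨c, hc.1, hc_zero⟩

theorem mem_gardingCone_of_cons_mem {k : ℕ} {a : ℝ} {t : Multiset ℝ}
    (h : a ::ₘ t ∈ gardingCone (k + 1)) : t ∈ gardingCone k := by
  induction k generalizing a t with
  | zero => simp [gardingCone, esymm_zero]
  | succ k ih =>
    have ht : t ∈ gardingCone k := ih (gardingCone_anti (by omega) h)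
    intro l hl
    rcases hl.lt_or_eq with hl | rfl
    · exact ht l (by omega)
    by_contra! hneg
    have hcard : k + 1 ≤ card t := by
      simpa using le_card_of_mem_gardingCone h
    obtain ⟨c, hc, hzero⟩ := exists_esymm_map_add_eq_zero hcard hneg
    have hshift : (a + c) ::ₘ t.map (· + c) ∈ gardingCone (k + 2) := by
      simpa using map_add_mem_gardingCone h hc
    have h₀ : 0 < (t.map (· + c)).esymm k := ih (gardingCone_anti (by omega) hshift) k le_rfl
    have h₂ : 0 < (t.map (· + c)).esymm (k + 2) := by
      simpa [esymm_cons_succ, hzero] using hshift (k + 2) le_rfl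
    exact h₂.not_ge (esymm_add_two_nonpos hzero h₀)

theorem succ_mul_esymm_le {t : Multiset ℝ} {j : ℕ} (ht : t ∈ gardingCone j) {c : ℝ}
    (hc : 0 ≤ c) (hle : ∀ b ∈ t, b ≤ c) :
    (j + 1) * t.esymm (j + 1) ≤ c * (card t - j : ℕ) * t.esymm j := by
  rcases le_or_gt (t.esymm (j + 1)) 0 with hneg | hpos
  · calc (j + 1) * t.esymm (j + 1) ≤ 0 := mul_nonpos_of_nonneg_of_nonpos (by positivity) hneg
      _ ≤ c * (card t - j : ℕ) * t.esymm j :=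
        mul_nonneg (mul_nonneg hc (Nat.cast_nonneg _)) (ht j le_rfl).le
  have ht' : t ∈ gardingCone (j + 1) := fun l hl =>
    hl.lt_or_eq.elim (fun hl => ht l (by omega)) (fun hl => hl ▸ hpos)
  have herase_pos : ∀ b ∈ t, 0 < (t.erase b).esymm j := fun b hb =>
    mem_gardingCone_of_cons_mem (by rw [cons_erase hb]; exact ht') j le_rfl
  calc (j + 1) * t.esymm (j + 1) = (t.map fun b => b * (t.erase b).esymm j).sum :=
        (sum_map_mul_esymm_erase t j).symm
    _ ≤ (t.map fun b => c * (t.erase b).esymm j).sum :=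
        sum_map_le_sum_map _ _ fun b hb =>
          mul_le_mul_of_nonneg_right (hle b hb) (herase_pos b hb).le
    _ = c * (card t - j : ℕ) * t.esymm j := by
        rw [sum_map_mul_left, sum_map_esymm_erase, mul_assoc]

theorem pos_of_cons_mem_gardingCone {a : ℝ} {t : Multiset ℝ} (h : a ::ₘ t ∈ gardingCone 1)
    (hle : ∀ b ∈ t, b ≤ a) : 0 < a := by
  have hsum := h 1 le_rfl
  rw [esymm_one, sum_cons] at hsum
  have hsum_le := sum_le_card_nsmul t a hle
  rw [nsmul_eq_mul] at hsum_le
  have hmul : 0 < ((card t : ℝ) + 1) * a := by linarith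
  exact pos_of_mul_pos_right hmul (by positivity)

theorem succ_mul_esymm_cons_le {a : ℝ} {t : Multiset ℝ} {j : ℕ}
    (h : a ::ₘ t ∈ gardingCone (j + 1)) (hle : ∀ b ∈ t, b ≤ a) :
    (j + 1) * (a ::ₘ t).esymm (j + 1) ≤ (card t + 1) * (a * t.esymm j) := by
  have ht := mem_gardingCone_of_cons_mem h
  have ha := pos_of_cons_mem_gardingCone (gardingCone_anti (by omega) h) hle
  have hbound := succ_mul_esymm_le ht ha.le hle
  rw [Nat.cast_sub (le_card_of_mem_gardingCone ht)] at hbound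
  rw [esymm_cons_succ]
  linear_combination hbound

end Multiset

theorem Finset.univ_val_map_update {ι R : Type*} [Fintype ι] [DecidableEq ι] (x : ι → R) (i : ι)
    (c : R) : univ.val.map (Function.update x i c) = c ::ₘ (univ.val.erase i).map x := by
  rw [← Multiset.cons_erase (mem_univ_val i), Multiset.map_cons, Function.update_self,
    Multiset.erase_cons_head]
  refine congrArg _ (Multiset.map_congr rfl fun j hj => Function.update_of_ne ?_ _ _)
  exact (univ.nodup.mem_erase_iff.mp hj).1

theorem first_coord_lower_bound_general (n k : ℕ) (hn : 0 < n) (hk : 1 ≤ k)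
    (x : Fin n → ℝ) (hx : GammaK n k x) (hmono : Antitone x) :
    x ⟨0, hn⟩ * esymm n (k - 1) (Function.update x ⟨0, hn⟩ 0) ≥
      ((k : ℝ) / (n : ℝ)) * esymm n k x := by
  obtain ⟨j, rfl⟩ : ∃ j, k = j + 1 := ⟨k - 1, by omega⟩
  set i₀ : Fin n := ⟨0, hn⟩
  set t := (univ.val.erase i₀).map x
  have hesymm (y : Fin n → ℝ) (l : ℕ) : esymm n l y = (univ.val.map y).esymm l :=
    (esymm_map_val y univ l).symm
  have hx_cons : univ.val.map x = x i₀ ::ₘ t := by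
    simpa using univ_val_map_update x i₀ (x i₀)
  have hcone : x i₀ ::ₘ t ∈ Multiset.gardingCone (j + 1) := by
    rintro (_ | l) hl
    · simp [Multiset.esymm_zero]
    · rw [← hx_cons, ← hesymm]
      exact hx _ (by omega) hl
  have hle : ∀ b ∈ t, b ≤ x i₀ := by
    intro b hb
    obtain ⟨i, -, rfl⟩ := Multiset.mem_map.mp hb
    exact hmono (Fin.mk_le_of_le_val (Nat.zero_le _))
  have hcard : (Multiset.card t : ℝ) + 1 = n := by
    have h := congrArg Multiset.card hx_cons
    rw [Multiset.card_map, Multiset.card_cons, card_val, card_univ, Fintype.card_fin] at h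
    exact_mod_cast h.symm
  have hmain := Multiset.succ_mul_esymm_cons_le hcone hle
  rw [hcard] at hmain
  rw [hesymm, hesymm, univ_val_map_update, hx_cons, Multiset.esymm_zero_cons, Nat.add_sub_cancel,
    ge_iff_le, div_mul_eq_mul_div, div_le_iff₀ (by positivity)]
  push_cast
  linarith

/-- If x ∈ Γₖⁿ is decreasing, then x₁·s_{k-1}(x|1) ≥ (k/n)·s_k(x). -/
theorem first_coord_lower_bound (n k : ℕ) (hn : 0 < n) (hk : 1 ≤ k) (hkn : k ≤ n)
    (x : Fin n → ℝ) (hx : GammaK n k x) (hmono : Antitone x) :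
    x ⟨0, hn⟩ * esymm n (k - 1) (Function.update x ⟨0, hn⟩ 0) ≥
      ((k : ℝ) / (n : ℝ)) * esymm n k x :=
  first_coord_lower_bound_general n k hn hk x hx hmono
end

section
/- For x ∈ Γ_k^n with x_1 ≥ x_2 ≥ ... ≥ x_n, there exists a constant C > 0 depending only on n and k such that s_{k-1}(x|k) ≥ C·s_{k-1}(x), where x|k denotes x with its k-th coordinate set to 0. -/
open Finset

namespace NA

open Polynomial

variable {n : ℕ}

lemma mesymm_zero (w : Multiset ℝ) : w.esymm 0 = 1 := by
  simp [Multiset.esymm, Multiset.powersetCard_zero_left]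

lemma mesymm_of_lt {w : Multiset ℝ} {l : ℕ} (h : Multiset.card w < l) : w.esymm l = 0 := by
  simp [Multiset.esymm, Multiset.powersetCard_eq_empty _ h]

lemma mesymm_cons (a : ℝ) (w : Multiset ℝ) (l : ℕ) :
    (a ::ₘ w).esymm (l+1) = w.esymm (l+1) + a * w.esymm l := by
  simp only [Multiset.esymm, Multiset.powersetCard_cons, Multiset.map_add, Multiset.sum_add,
    Multiset.map_map, Function.comp_def, Multiset.prod_cons]
  rw [Multiset.sum_map_mul_left]

lemma mesymm_card (w : Multiset ℝ) : w.esymm (Multiset.card w) = w.prod := by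
  induction w using Multiset.induction_on with
  | empty => simp [mesymm_zero]
  | cons a w ih =>
    rw [Multiset.card_cons, mesymm_cons, mesymm_of_lt (by simp), ih, Multiset.prod_cons]
    ring

lemma exists_deriv (w : Multiset ℝ) (hm : 1 ≤ Multiset.card w) :
    ∃ w' : Multiset ℝ, Multiset.card w' = Multiset.card w - 1 ∧
      ∀ i, i ≤ Multiset.card w - 1 →
        (Multiset.card w : ℝ) * w'.esymm i = ((Multiset.card w - i : ℕ) : ℝ) * w.esymm i := by
  classical
  set m := Multiset.card w with hmdef
  set p : Polynomial ℝ := (w.map (fun a => X + C a)).prod with hp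
  have hmon : ∀ a ∈ w, (X + C a).Monic := fun a _ => monic_X_add_C a
  have hpm : p.Monic := monic_multiset_prod_of_monic _ _ hmon
  have hmon' : ∀ f ∈ w.map (fun a => X + C a), f.Monic := by
    intro f hf
    obtain ⟨a, _, rfl⟩ := Multiset.mem_map.mp hf
    exact monic_X_add_C a
  have hpdeg : p.natDegree = m := by
    rw [hp, natDegree_multiset_prod_of_monic _ hmon']
    simp [Multiset.map_map, Function.comp_def, hmdef]
  have hXCroots : ∀ a : ℝ, (X + C a).roots = {-a} := by
    intro a
    rw [show X + C a = X - C (-a) by rw [map_neg, sub_neg_eq_add], roots_X_sub_C]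
  have hproots : p.roots = w.map (fun a => -a) := by
    rw [hp, roots_multiset_prod]
    · rw [Multiset.bind_map]
      simp only [hXCroots, Multiset.bind_singleton]
    · intro h0
      obtain ⟨a, _, ha⟩ := Multiset.mem_map.mp h0
      exact (monic_X_add_C a).ne_zero ha
  have hcroots : Multiset.card p.roots = m := by rw [hproots]; simp [hmdef]
  set q : Polynomial ℝ := derivative p with hq
  have hqdeg_le : q.natDegree ≤ m - 1 := (natDegree_derivative_le p).trans (by omega)
  have hqroots_ge : m - 1 ≤ Multiset.card q.roots := by
    have h := p.card_roots_le_derivative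
    rw [hcroots, ← hq] at h
    omega
  have hqroots_le : Multiset.card q.roots ≤ q.natDegree := q.card_roots'
  have hqcard : Multiset.card q.roots = m - 1 := le_antisymm (hqroots_le.trans hqdeg_le) hqroots_ge
  have hqdeg : q.natDegree = m - 1 := le_antisymm hqdeg_le (hqcard ▸ hqroots_le)
  refine ⟨q.roots.map (fun r => -r), by simp [hqcard], ?_⟩
  intro i hi
  have hlead : q.leadingCoeff = (m : ℝ) := by
    rw [leadingCoeff, hqdeg, hq, coeff_derivative]
    have h6 : m - 1 + 1 = m := by omega
    have h7 : p.coeff (m - 1 + 1) = 1 := by rw [h6, ← hpdeg]; exact hpm.coeff_natDegree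
    rw [h7, Nat.cast_sub hm]
    push_cast; ring
  have hcoeffq : q.coeff (m - 1 - i) = (m : ℝ) * (-1)^i * q.roots.esymm i := by
    have h1 : m - 1 - i ≤ q.natDegree := by omega
    have h5 : q.natDegree - (m - 1 - i) = i := by omega
    have h8 := Polynomial.coeff_eq_esymm_roots_of_card (hqcard.trans hqdeg.symm) h1
    rw [h8, hlead, h5]
  have hcoeffq2 : q.coeff (m - 1 - i) = w.esymm i * ((m - i : ℕ) : ℝ) := by
    rw [hq, coeff_derivative]
    have h2 : m - 1 - i + 1 = m - i := by omega
    rw [h2]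
    have h3 : p.coeff (m - i) = w.esymm i := by
      have h4 : m - i ≤ Multiset.card w := by omega
      have h9 := Multiset.prod_X_add_C_coeff w h4
      rw [← hp, ← hmdef] at h9
      rw [h9]
      congr 1
      omega
    rw [h3, show ((m - 1 - i : ℕ):ℝ) + 1 = ((m - 1 - i + 1 : ℕ):ℝ) by push_cast; ring,
      show m - 1 - i + 1 = m - i from by omega]
  rw [Multiset.esymm_neg]
  have hneg : ((-1:ℝ))^i * ((-1):ℝ)^i = 1 := by
    rw [← pow_add]
    exact Even.neg_one_pow ⟨i, rfl⟩
  have key : (m:ℝ) * q.roots.esymm i = (-1)^i * q.coeff (m - 1 - i) := by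
    rw [hcoeffq, show (-1:ℝ)^i * ((m:ℝ) * (-1)^i * q.roots.esymm i)
      = ((-1:ℝ)^i * (-1)^i) * ((m:ℝ) * q.roots.esymm i) from by ring, hneg, one_mul]
  calc (m:ℝ) * ((-1)^i * q.roots.esymm i)
      = (-1)^i * ((m:ℝ) * q.roots.esymm i) := by ring
    _ = ((-1:ℝ)^i * (-1)^i) * q.coeff (m-1-i) := by rw [key]; ring
    _ = q.coeff (m-1-i) := by rw [hneg, one_mul]
    _ = ((m - i : ℕ) : ℝ) * w.esymm i := by rw [hcoeffq2]; ring

lemma mesymm_inv (w : Multiset ℝ) (h0 : (0:ℝ) ∉ w) :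
    ∀ i, i ≤ Multiset.card w →
      (w.map (fun a => a⁻¹)).esymm i * w.prod = w.esymm (Multiset.card w - i) := by
  induction w using Multiset.induction_on with
  | empty =>
    intro i hi
    simp only [Multiset.card_zero, Nat.le_zero] at hi
    subst hi
    simp [mesymm_zero]
  | cons a w ih =>
    have ha : a ≠ 0 := fun h => h0 (h ▸ Multiset.mem_cons_self a w)
    have h0' : (0:ℝ) ∉ w := fun h => h0 (Multiset.mem_cons_of_mem h)
    intro i hi
    rw [Multiset.card_cons] at hi ⊢
    rw [Multiset.map_cons, Multiset.prod_cons]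
    rcases Nat.eq_zero_or_pos i with rfl | hipos
    · rw [mesymm_zero, one_mul, Nat.sub_zero, ← Multiset.card_cons a w, mesymm_card,
        Multiset.prod_cons]
    · obtain ⟨t, rfl⟩ : ∃ t, i = t + 1 := ⟨i - 1, by omega⟩
      rw [mesymm_cons]
      rcases Nat.lt_or_ge t (Multiset.card w) with hlt | hge
      · have e1 := ih h0' (t+1) hlt
        have e2 := ih h0' t (by omega)
        have hsub : Multiset.card w + 1 - (t + 1) = (Multiset.card w - (t+1)) + 1 := by omega
        rw [hsub, mesymm_cons]
        have hsub2 : Multiset.card w - (t + 1) + 1 = Multiset.card w - t := by omega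
        calc ((w.map (fun a => a⁻¹)).esymm (t+1) + a⁻¹ * (w.map (fun a => a⁻¹)).esymm t)
              * (a * w.prod)
            = a * ((w.map (fun a => a⁻¹)).esymm (t+1) * w.prod)
              + (a⁻¹ * a) * ((w.map (fun a => a⁻¹)).esymm t * w.prod) := by ring
          _ = a * w.esymm (Multiset.card w - (t+1)) + w.esymm (Multiset.card w - t) := by
              rw [e1, e2, inv_mul_cancel₀ ha, one_mul]
          _ = w.esymm (Multiset.card w - (t + 1) + 1) + a * w.esymm (Multiset.card w - (t+1)) := by
              rw [hsub2]; ring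
      · have ht : t = Multiset.card w := by omega
        subst ht
        rw [mesymm_of_lt (by simp), Nat.sub_self, mesymm_zero]
        have e2 := ih h0' (Multiset.card w) le_rfl
        rw [Nat.sub_self, mesymm_zero] at e2
        calc (0 + a⁻¹ * (w.map (fun a => a⁻¹)).esymm (Multiset.card w)) * (a * w.prod)
            = (a⁻¹ * a) * ((w.map (fun a => a⁻¹)).esymm (Multiset.card w) * w.prod) := by ring
          _ = 1 := by rw [e2, inv_mul_cancel₀ ha, one_mul]

lemma choose_cast_id (m i : ℕ) (h : i ≤ m) :
    (m:ℝ) * ((m-1).choose i : ℝ) = (m.choose i : ℝ) * ((m - i : ℕ) : ℝ) := by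
  rcases Nat.eq_zero_or_pos m with rfl | hm
  · interval_cases i; simp
  · have h1 : m * (m-1).choose i = m.choose i * (m - i) := by
      have h2 := Nat.add_one_mul_choose_eq (m-1) i
      rw [show m - 1 + 1 = m from by omega] at h2
      rw [h2, Nat.choose_succ_right_eq]
    exact_mod_cast congrArg (Nat.cast : ℕ → ℝ) h1

theorem newton_all : ∀ (m : ℕ) (w : Multiset ℝ), Multiset.card w = m → ∀ j, j + 2 ≤ m →
    ((m.choose j : ℝ) * (m.choose (j+2))) * (w.esymm (j+1))^2
      ≥ ((m.choose (j+1) : ℝ))^2 * (w.esymm j * w.esymm (j+2)) := by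
  intro m
  induction m using Nat.strong_induction_on with
  | _ m IH =>
  -- the case j + 2 < m, via differentiation
  have deriv_case : ∀ (w : Multiset ℝ), Multiset.card w = m → ∀ j, j + 2 < m →
      ((m.choose j : ℝ) * (m.choose (j+2))) * (w.esymm (j+1))^2
        ≥ ((m.choose (j+1) : ℝ))^2 * (w.esymm j * w.esymm (j+2)) := by
    intro w hw j hj
    obtain ⟨w', hc, hs⟩ := exists_deriv w (by omega)
    rw [hw] at hc hs
    have hG := IH (m-1) (by omega) w' hc j (by omega)
    set e0 := w.esymm j; set e1 := w.esymm (j+1); set e2 := w.esymm (j+2)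
    set E0 := w'.esymm j; set E1 := w'.esymm (j+1); set E2 := w'.esymm (j+2)
    set u0 : ℝ := ((m - j : ℕ) : ℝ); set u1 : ℝ := ((m - (j+1) : ℕ) : ℝ)
    set u2 : ℝ := ((m - (j+2) : ℕ) : ℝ)
    have hs0 : (m:ℝ) * E0 = u0 * e0 := hs j (by omega)
    have hs1 : (m:ℝ) * E1 = u1 * e1 := hs (j+1) (by omega)
    have hs2 : (m:ℝ) * E2 = u2 * e2 := hs (j+2) (by omega)
    have hc0 : (m:ℝ) * ((m-1).choose j : ℝ) = (m.choose j : ℝ) * u0 :=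
      choose_cast_id m j (by omega)
    have hc1 : (m:ℝ) * ((m-1).choose (j+1) : ℝ) = (m.choose (j+1) : ℝ) * u1 :=
      choose_cast_id m (j+1) (by omega)
    have hc2 : (m:ℝ) * ((m-1).choose (j+2) : ℝ) = (m.choose (j+2) : ℝ) * u2 :=
      choose_cast_id m (j+2) (by omega)
    have hu0 : 0 < u0 := Nat.cast_pos.mpr (by omega)
    have hu1 : 0 < u1 := Nat.cast_pos.mpr (by omega)
    have hu2 : 0 < u2 := Nat.cast_pos.mpr (by omega)
    have hD : (0:ℝ) < u0 * u1^2 * u2 := by positivity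
    rw [ge_iff_le, ← mul_le_mul_iff_left₀ hD]
    calc (m.choose (j+1) : ℝ)^2 * (e0 * e2) * (u0 * u1^2 * u2)
        = ((m.choose (j+1):ℝ) * u1)^2 * ((u0 * e0) * (u2 * e2)) := by ring
      _ = ((m:ℝ) * ((m-1).choose (j+1) : ℝ))^2 * (((m:ℝ) * E0) * ((m:ℝ) * E2)) := by
          rw [hc1, hs0, hs2]
      _ = ((m:ℝ))^4 * (((m-1).choose (j+1) : ℝ)^2 * (E0 * E2)) := by ring
      _ ≤ ((m:ℝ))^4 * ((((m-1).choose j : ℝ) * ((m-1).choose (j+2))) * E1^2) :=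
          mul_le_mul_of_nonneg_left hG (by positivity)
      _ = ((m:ℝ) * ((m-1).choose j : ℝ)) * ((m:ℝ) * ((m-1).choose (j+2) : ℝ))
            * ((m:ℝ) * E1)^2 := by ring
      _ = ((m.choose j : ℝ) * u0) * ((m.choose (j+2) : ℝ) * u2) * (u1 * e1)^2 := by
          rw [hc0, hc2, hs1]
      _ = (m.choose j : ℝ) * (m.choose (j+2)) * e1^2 * (u0 * u1^2 * u2) := by ring
  intro w hw j hj
  rcases Nat.lt_or_ge (j+2) m with hlt | hge
  · exact deriv_case w hw j hlt
  have hjm : j + 2 = m := by omega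
  rcases Nat.lt_or_ge m 3 with hm2 | hm3
  · -- m = 2, j = 0
    have hm : m = 2 := by omega
    have hj0 : j = 0 := by omega
    subst hj0; subst hm
    obtain ⟨a, b, rfl⟩ := Multiset.card_eq_two.mp hw
    have h1 : ({a, b} : Multiset ℝ).esymm 1 = a + b := by
      have : ({a, b} : Multiset ℝ) = a ::ₘ (b ::ₘ 0) := rfl
      rw [this, mesymm_cons]
      have : (b ::ₘ (0:Multiset ℝ)).esymm 1 = b := by
        have h2 := mesymm_cons b 0 0
        rw [mesymm_zero] at h2
        rw [h2, mesymm_of_lt (by simp)]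
        ring
      rw [this, mesymm_zero]
      ring
    have h2 : ({a, b} : Multiset ℝ).esymm 2 = a * b := by
      have := mesymm_card ({a,b} : Multiset ℝ)
      rw [hw] at this
      rw [this]
      simp
    have h0 : ({a, b} : Multiset ℝ).esymm 0 = 1 := mesymm_zero _
    rw [h0, h1, h2]
    norm_num
    nlinarith [sq_nonneg (a - b)]
  · -- j + 2 = m ≥ 3, reversal
    by_cases h0w : (0:ℝ) ∈ w
    · -- esymm (j+2) w = prod w = 0
      have hprod : w.prod = 0 := Multiset.prod_eq_zero h0w
      have he : w.esymm (j+2) = 0 := by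
        rw [hjm, ← hw, mesymm_card]
        exact hprod
      rw [he]
      have : ((m.choose (j+1) : ℝ))^2 * (w.esymm j * 0) = 0 := by ring
      rw [this]
      positivity
    · set u := w.map (fun a => a⁻¹) with hu
      have hcu : Multiset.card u = m := by rw [hu, Multiset.card_map, hw]
      have hN0 := deriv_case u hcu 0 (by omega)
      rw [Nat.choose_zero_right, Nat.cast_one, one_mul, mesymm_zero, one_mul] at hN0
      have hinv := mesymm_inv w h0w
      rw [hw] at hinv
      have hi1 : u.esymm 1 * w.prod = w.esymm (m - 1) := hinv 1 (by omega)
      have hi2 : u.esymm 2 * w.prod = w.esymm (m - 2) := hinv 2 (by omega)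
      have hem : w.esymm m = w.prod := by rw [← hw, mesymm_card]
      have hj2 : j = m - 2 := by omega
      have hj1 : j + 1 = m - 1 := by omega
      have hcs0 : m.choose j = m.choose 2 := by rw [hj2, Nat.choose_symm (by omega)]
      have hcs1 : m.choose (j+1) = m.choose 1 := by rw [hj1, Nat.choose_symm (by omega)]
      have hcs2 : m.choose (j+2) = 1 := by rw [hjm, Nat.choose_self]
      rw [hcs0, hcs1, hcs2, hj1, hjm, hj2, hem, Nat.cast_one, mul_one]
      rw [ge_iff_le]
      calc (m.choose 1 : ℝ)^2 * (w.esymm (m-2) * w.prod)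
          = ((m.choose 1:ℝ)^2 * ((u.esymm 2 * w.prod) * w.prod)) := by rw [hi2]
        _ = ((m.choose 1:ℝ)^2 * u.esymm 2) * w.prod^2 := by ring
        _ ≤ ((m.choose 2:ℝ) * (u.esymm 1)^2) * w.prod^2 := by
            apply mul_le_mul_of_nonneg_right _ (sq_nonneg _)
            linarith [hN0]
        _ = (m.choose 2 : ℝ) * (u.esymm 1 * w.prod)^2 := by ring
        _ = (m.choose 2 : ℝ) * w.esymm (m-1)^2 := by rw [hi1]

noncomputable def E (x : Fin n → ℝ) (s : Finset (Fin n)) (l : ℕ) : ℝ :=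
  ∑ A ∈ s.powersetCard l, ∏ i ∈ A, x i

lemma E_eq_mesymm (x : Fin n → ℝ) (s : Finset (Fin n)) (l : ℕ) :
    E x s l = (s.val.map x).esymm l := (Finset.esymm_map_val x s l).symm

lemma E_zero (x : Fin n → ℝ) (s : Finset (Fin n)) : E x s 0 = 1 := by
  rw [E_eq_mesymm, mesymm_zero]

lemma E_of_card_lt {x : Fin n → ℝ} {s : Finset (Fin n)} {l : ℕ} (h : s.card < l) :
    E x s l = 0 := by
  rw [E_eq_mesymm, mesymm_of_lt]
  rwa [Multiset.card_map]

lemma E_peel (x : Fin n → ℝ) {s : Finset (Fin n)} {i : Fin n} (hi : i ∈ s) (l : ℕ) :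
    E x s (l+1) = E x (s.erase i) (l+1) + x i * E x (s.erase i) l := by
  have hv : s.val.map x = x i ::ₘ ((s.erase i).val.map x) := by
    rw [Finset.erase_val, ← Multiset.map_cons, Multiset.cons_erase hi]
  rw [E_eq_mesymm, E_eq_mesymm, E_eq_mesymm, hv, mesymm_cons]

lemma E_nonneg {x : Fin n → ℝ} {s : Finset (Fin n)} (h : ∀ i ∈ s, 0 ≤ x i) (l : ℕ) :
    0 ≤ E x s l := by
  apply Finset.sum_nonneg
  intro A hA
  exact Finset.prod_nonneg fun i hiA => h i ((Finset.mem_powersetCard.mp hA).1 hiA)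

lemma E_congr {x y : Fin n → ℝ} {s : Finset (Fin n)} (h : ∀ i ∈ s, x i = y i) (l : ℕ) :
    E x s l = E y s l := by
  apply Finset.sum_congr rfl
  intro A hA
  exact Finset.prod_congr rfl fun i hiA => h i ((Finset.mem_powersetCard.mp hA).1 hiA)

lemma E_smul (c : ℝ) (x : Fin n → ℝ) (s : Finset (Fin n)) (l : ℕ) :
    E (fun i => c * x i) s l = c^l * E x s l := by
  rw [E, E, Finset.mul_sum]
  apply Finset.sum_congr rfl
  intro A hA
  rw [Finset.prod_mul_distrib, Finset.prod_const, (Finset.mem_powersetCard.mp hA).2]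

lemma E_continuous (s : Finset (Fin n)) (l : ℕ) : Continuous (fun x : Fin n → ℝ => E x s l) := by
  apply continuous_finset_sum
  intro A _
  exact continuous_finset_prod _ fun i _ => continuous_apply i

lemma newtonE (x : Fin n → ℝ) (s : Finset (Fin n)) (j : ℕ) (hj : j + 2 ≤ s.card) :
    ((s.card.choose j : ℝ) * (s.card.choose (j+2))) * (E x s (j+1))^2
      ≥ ((s.card.choose (j+1) : ℝ))^2 * (E x s j * E x s (j+2)) := by
  rw [E_eq_mesymm, E_eq_mesymm, E_eq_mesymm]
  exact newton_all s.card (s.val.map x) (by rw [Multiset.card_map]; rfl) j hj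

lemma choose_sq_gt {m j : ℕ} (h : j + 2 ≤ m) :
    (m.choose j : ℝ) * (m.choose (j+2)) < ((m.choose (j+1) : ℝ))^2 := by
  set a : ℝ := (m.choose j : ℝ)
  set b : ℝ := (m.choose (j+1) : ℝ)
  set c : ℝ := (m.choose (j+2) : ℝ)
  have r1 : b * ((j:ℝ)+1) = a * ((m:ℝ) - (j:ℝ)) := by
    have := Nat.choose_succ_right_eq m j
    have h2 : ((m.choose (j+1) * (j+1) : ℕ) : ℝ) = ((m.choose j * (m - j) : ℕ) : ℝ) :=
      congrArg (fun t : ℕ => (t:ℝ)) this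
    push_cast [Nat.cast_sub (by omega : j ≤ m)] at h2
    linarith [h2]
  have r2 : c * ((j:ℝ)+2) = b * ((m:ℝ) - (j:ℝ) - 1) := by
    have := Nat.choose_succ_right_eq m (j+1)
    have h2 : ((m.choose (j+2) * (j+2) : ℕ) : ℝ) = ((m.choose (j+1) * (m - (j+1)) : ℕ) : ℝ) := by
      rw [show j + 2 = j + 1 + 1 from rfl]
      exact congrArg (fun t : ℕ => (t:ℝ)) this
    push_cast [Nat.cast_sub (by omega : j + 1 ≤ m)] at h2
    linarith [h2]
  have ha : (1:ℝ) ≤ a := Nat.one_le_cast.mpr (Nat.choose_pos (show j ≤ m by omega))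
  have hb : (1:ℝ) ≤ b := Nat.one_le_cast.mpr (Nat.choose_pos (show j + 1 ≤ m by omega))
  have hj0 : (0:ℝ) ≤ (j:ℝ) := Nat.cast_nonneg j
  have hm : (0:ℝ) < (m:ℝ) + 1 := by positivity
  have key : (b^2 - a*c) * (((j:ℝ)+1)*((j:ℝ)+2)) = a*b*((m:ℝ)+1) := by
    linear_combination (b*((j:ℝ)+2))*r1 - (a*((j:ℝ)+1))*r2
  nlinarith [key, mul_pos (mul_pos (by linarith : (0:ℝ) < a) (by linarith : (0:ℝ) < b)) hm,
    mul_pos (by linarith : (0:ℝ) < (j:ℝ)+1) (by linarith : (0:ℝ) < (j:ℝ)+2)]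

lemma Bstar {x : Fin n → ℝ} {s : Finset (Fin n)} {i : Fin n} (his : i ∈ s) (hxi : 0 < x i)
    {r : ℕ} (h : ∀ l, l ≤ r → 0 ≤ E x s l) :
    ∀ l, l + 1 ≤ r → 0 ≤ E x (s.erase i) l := by
  intro l
  induction l using Nat.strong_induction_on with
  | _ l IHl =>
  intro hl
  by_contra hneg
  push_neg at hneg
  rcases Nat.eq_zero_or_pos l with rfl | hlpos
  · rw [E_zero] at hneg; linarith
  obtain ⟨t, rfl⟩ : ∃ t, l = t + 1 := ⟨l - 1, by omega⟩
  have hpeel1 := E_peel x his t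
  have hpeel2 := E_peel x his (t+1)
  have hprev : 0 ≤ E x (s.erase i) t := IHl t (by omega) (by omega)
  set e0 := E x (s.erase i) t with he0
  set e1 := E x (s.erase i) (t+1) with he1
  set e2 := E x (s.erase i) (t+1+1) with he2
  have hA : (0:ℝ) < -e1 := by linarith
  have h1 : -e1 ≤ x i * e0 := by
    have h3 := h (t+1) (by omega)
    rw [hpeel1] at h3
    linarith
  have h2 : x i * (-e1) ≤ e2 := by
    have h3 := h (t+2) (by omega)
    rw [show t+2 = t+1+1 from rfl, hpeel2] at h3
    nlinarith [h3]
  have hcard : t + 2 ≤ (s.erase i).card := by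
    by_contra hc
    push_neg at hc
    rw [he2, show t+1+1 = t+2 from rfl, E_of_card_lt (by omega)] at h2
    nlinarith
  have hnewton := newtonE x (s.erase i) t hcard
  rw [← he0, ← he1, show t+2 = t+1+1 from rfl, ← he2] at hnewton
  have hmul : (-e1) * (x i * (-e1)) ≤ (x i * e0) * e2 :=
    mul_le_mul h1 h2 (by positivity) (by nlinarith)
  have hprod : e1^2 ≤ e0 * e2 := by nlinarith [hmul, hxi]
  have hsq : 0 < e1^2 := by nlinarith [hA]
  have hchoose := choose_sq_gt (m := (s.erase i).card) (j := t) hcard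
  set Ct : ℝ := ((s.erase i).card.choose t : ℝ)
  set Ct1 : ℝ := ((s.erase i).card.choose (t+1) : ℝ)
  set Ct2 : ℝ := ((s.erase i).card.choose (t+2) : ℝ)
  have hCnn : (0:ℝ) ≤ Ct1^2 := by positivity
  nlinarith [hnewton, hprod, hchoose, hsq, mul_le_mul_of_nonneg_left hprod hCnn]

def tl (n : ℕ) (j : ℕ) : Finset (Fin n) := univ.filter (fun i => j ≤ (i:ℕ))

lemma mem_tl {j : ℕ} {i : Fin n} : i ∈ tl n j ↔ j ≤ (i:ℕ) := by
  simp [tl]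

lemma tl_zero : tl n 0 = univ := by
  ext i; simp [mem_tl]

lemma fmk {a b : ℕ} (ha : a < n) (hb : b < n) (h : a = b) : (⟨a,ha⟩ : Fin n) = ⟨b,hb⟩ := by
  subst h; rfl

lemma tl_erase_self {j : ℕ} (hj : j < n) : (tl n j).erase ⟨j, hj⟩ = tl n (j+1) := by
  ext i
  simp only [Finset.mem_erase, mem_tl, Ne, Fin.ext_iff, Fin.val_mk]
  omega

lemma tl_erase_erase {j : ℕ} (hj : j < n) (κ : Fin n) :
    ((tl n j).erase κ).erase ⟨j, hj⟩ = (tl n (j+1)).erase κ := by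
  ext i
  simp only [Finset.mem_erase, mem_tl, Ne, Fin.ext_iff, Fin.val_mk]
  omega

lemma E_one (x : Fin n → ℝ) (s : Finset (Fin n)) : E x s 1 = ∑ i ∈ s, x i := by
  rw [E, Finset.powersetCard_one, Finset.sum_map]
  apply Finset.sum_congr rfl
  intro i _
  simp

lemma sum_tail_le {x : Fin n → ℝ} (hx : Antitone x) {j : ℕ} (hj : j < n) :
    ∑ i ∈ tl n j, x i ≤ ((tl n j).card : ℝ) * x ⟨j, hj⟩ := by
  rw [← nsmul_eq_mul]
  apply Finset.sum_le_card_nsmul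
  intro i hi
  exact hx (show (⟨j, hj⟩ : Fin n) ≤ i by rw [Fin.le_def]; simpa using mem_tl.mp hi)

lemma tail_zero_of_nonpos {x : Fin n → ℝ} (hx : Antitone x) {j : ℕ} (hj : j < n)
    (hxj : x ⟨j, hj⟩ ≤ 0) (hsum : 0 ≤ ∑ i ∈ tl n j, x i) : ∀ i ∈ tl n j, x i = 0 := by
  have hle : ∀ i ∈ tl n j, x i ≤ 0 := by
    intro i hi
    refine le_trans (hx ?_) hxj
    rw [Fin.le_def]
    exact mem_tl.mp hi
  have := (Finset.sum_eq_zero_iff_of_nonpos hle).mp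
    (le_antisymm (Finset.sum_nonpos hle) hsum)
  exact this

lemma Zlem : ∀ (ρ : ℕ) (x : Fin n → ℝ), Antitone x → ∀ (j : ℕ) (hjr : j + ρ + 1 ≤ n),
    (∀ l, 1 ≤ l → l ≤ ρ + 1 → 0 ≤ E x (tl n j) l) → 0 ≤ x ⟨j + ρ, by omega⟩ := by
  intro ρ
  induction ρ with
  | zero =>
    intro x hx j hjr h
    have h1 := h 1 le_rfl le_rfl
    rw [E_one] at h1
    have h2 := sum_tail_le hx (show j < n by omega)
    have hcard : 0 < ((tl n j).card : ℝ) := by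
      have hm : (⟨j, by omega⟩ : Fin n) ∈ tl n j := mem_tl.mpr le_rfl
      have := Finset.card_pos.mpr ⟨_, hm⟩
      exact_mod_cast this
    have heq : (⟨j + 0, by omega⟩ : Fin n) = ⟨j, by omega⟩ := fmk _ _ (by omega)
    rw [heq]
    nlinarith
  | succ ρ IH =>
    intro x hx j hjr h
    rcases le_or_gt (x ⟨j, by omega⟩) 0 with hxj | hxj
    · have hz := tail_zero_of_nonpos hx (show j < n by omega) hxj
        (by rw [← E_one]; exact h 1 le_rfl (by omega))
      have : x ⟨j + (ρ+1), by omega⟩ = 0 := hz _ (mem_tl.mpr (by simp))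
      linarith
    · have h' : ∀ l, l ≤ ρ + 2 → 0 ≤ E x (tl n j) l := by
        intro l hl
        rcases Nat.eq_zero_or_pos l with rfl | hp
        · rw [E_zero]; exact zero_le_one
        · exact h l hp (by omega)
      have hB := Bstar (mem_tl.mpr le_rfl) hxj h'
      rw [tl_erase_self (show j < n by omega)] at hB
      have hnext : ∀ l, 1 ≤ l → l ≤ ρ + 1 → 0 ≤ E x (tl n (j+1)) l := by
        intro l h1 h2
        exact hB l (by omega)
      have := IH x hx (j+1) (by omega) hnext
      have heq : (⟨j + 1 + ρ, by omega⟩ : Fin n) = ⟨j + (ρ+1), by omega⟩ := fmk _ _ (by omega)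
      rwa [heq] at this

lemma Slem : ∀ (ρ : ℕ) (x : Fin n → ℝ), Antitone x → ∀ (j : ℕ) (hjr : j + ρ + 1 ≤ n),
    (∀ l, 1 ≤ l → l ≤ ρ + 1 → 0 ≤ E x (tl n j) l) → 0 ≤ ∑ i ∈ tl n (j + ρ), x i := by
  intro ρ
  induction ρ with
  | zero =>
    intro x hx j hjr h
    have h1 := h 1 le_rfl le_rfl
    rw [E_one] at h1
    simpa using h1
  | succ ρ IH =>
    intro x hx j hjr h
    rcases le_or_gt (x ⟨j, by omega⟩) 0 with hxj | hxj
    · have hz := tail_zero_of_nonpos hx (show j < n by omega) hxj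
        (by rw [← E_one]; exact h 1 le_rfl (by omega))
      have : ∑ i ∈ tl n (j + (ρ+1)), x i = 0 := by
        apply Finset.sum_eq_zero
        intro i hi
        exact hz i (mem_tl.mpr (by have := mem_tl.mp hi; omega))
      linarith
    · have h' : ∀ l, l ≤ ρ + 2 → 0 ≤ E x (tl n j) l := by
        intro l hl
        rcases Nat.eq_zero_or_pos l with rfl | hp
        · rw [E_zero]; exact zero_le_one
        · exact h l hp (by omega)
      have hB := Bstar (mem_tl.mpr le_rfl) hxj h'
      rw [tl_erase_self (show j < n by omega)] at hB
      have := IH x hx (j+1) (by omega) (fun l h1 h2 => hB l (by omega))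
      rwa [show j + 1 + ρ = j + (ρ+1) from by omega] at this

lemma F1 (ρ : ℕ) (x : Fin n → ℝ) (hx : Antitone x) (j : ℕ) (hjr : j + ρ + 1 ≤ n)
    (h : ∀ l, 1 ≤ l → l ≤ ρ + 1 → 0 ≤ E x (tl n j) l)
    (hpos : 0 < x ⟨j + ρ, by omega⟩) :
    0 < E x ((tl n j).erase ⟨j + ρ, by omega⟩) ρ := by
  set κ : Fin n := ⟨j + ρ, by omega⟩ with hκ
  have hxκpos : ∀ (a : ℕ) (ha : a ≤ j + ρ), 0 < x ⟨a, by omega⟩ := by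
    intro a ha
    refine lt_of_lt_of_le hpos (hx ?_)
    rw [Fin.le_def]; simpa using ha
  have h' : ∀ l, l ≤ ρ + 1 → 0 ≤ E x (tl n j) l := by
    intro l hl
    rcases Nat.eq_zero_or_pos l with rfl | hp
    · rw [E_zero]; exact zero_le_one
    · exact h l hp hl
  have hκmem : κ ∈ tl n j := mem_tl.mpr (by simp [hκ])
  have hB := Bstar hκmem hpos h'
  have hge : 0 ≤ E x ((tl n j).erase κ) ρ := hB ρ le_rfl
  rcases lt_or_eq_of_le hge with h | heq0
  · exact h
  exfalso
  -- cascade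
  have claim : ∀ u t, u + t = ρ →
      (∀ l, l + t ≤ ρ + 1 → 0 ≤ E x ((tl n (j+t)).erase κ) l) →
      E x ((tl n (j+t)).erase κ) u = 0 → False := by
    intro u
    induction u with
    | zero =>
      intro t _ _ hzero
      rw [E_zero] at hzero
      linarith
    | succ u IHu =>
      intro t htu hnn hzero
      have hjt : j + t < n := by omega
      have hmem : (⟨j + t, hjt⟩ : Fin n) ∈ (tl n (j+t)).erase κ := by
        rw [Finset.mem_erase]
        constructor
        · intro he
          have : j + t = j + ρ := by
            have := congrArg Fin.val he
            simpa [hκ] using this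
          omega
        · exact mem_tl.mpr le_rfl
      have hxpos : 0 < x ⟨j + t, hjt⟩ := hxκpos (j+t) (by omega)
      have hnn' : ∀ l, l ≤ u + 2 → 0 ≤ E x ((tl n (j+t)).erase κ) l := by
        intro l hl
        exact hnn l (by omega)
      have hB2 := Bstar hmem hxpos hnn'
      rw [tl_erase_erase hjt κ] at hB2
      have hpeel := E_peel x hmem u
      rw [tl_erase_erase hjt κ] at hpeel
      have e1 : 0 ≤ E x ((tl n (j+t+1)).erase κ) (u+1) := hB2 (u+1) le_rfl
      have e2 : 0 ≤ E x ((tl n (j+t+1)).erase κ) u := hB2 u (by omega)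
      have hz2 : E x ((tl n (j+t+1)).erase κ) u = 0 := by nlinarith [hpeel, hzero, hxpos]
      refine IHu (t+1) (by omega) ?_ ?_
      · intro l hl
        rw [show j + (t+1) = j + t + 1 from by omega]
        exact hB2 l (by omega)
      · rw [show j + (t+1) = j + t + 1 from by omega]
        exact hz2
  apply claim ρ 0 (by omega) _ _
  · intro l hl
    rcases Nat.lt_or_ge l (ρ+1) with hlt | hge2
    · rw [show j + 0 = j from by omega]
      exact hB l (by omega)
    · have hl2 : l = ρ + 1 := by omega
      subst hl2
      have hp := E_peel x hκmem ρ
      have hσ := h' (ρ+1) le_rfl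
      rw [hp] at hσ
      rw [show j + 0 = j from by omega, ← heq0] at *
      nlinarith [hσ, hpos, heq0]
  · rw [show j + 0 = j from by omega]
    exact heq0.symm

noncomputable def xx (x : Fin n → ℝ) (t : ℕ) : ℝ := if h : t < n then x ⟨t, h⟩ else 0

lemma xx_eq (x : Fin n → ℝ) {t : ℕ} (h : t < n) : xx x t = x ⟨t, h⟩ := dif_pos h

lemma xx_nonneg {x : Fin n → ℝ} (hx : Antitone x) {κ : ℕ} (hκ : κ < n)
    (hκ0 : 0 ≤ x ⟨κ, hκ⟩) {t : ℕ} (ht : t ≤ κ) : 0 ≤ xx x t := by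
  rw [xx_eq x (by omega : t < n)]
  exact le_trans hκ0 (hx (by rw [Fin.le_def]; simpa using ht))

lemma lowbound {x : Fin n → ℝ} (hx : Antitone x) {κ : ℕ} (hκ : κ < n)
    (hκ0 : 0 ≤ x ⟨κ, hκ⟩) (hsum : 0 ≤ ∑ i ∈ tl n κ, x i) :
    ∀ i : Fin n, -((n:ℝ) * x ⟨κ, hκ⟩) ≤ x i := by
  intro i
  have hlast : n - 1 < n := by omega
  have h1 : x ⟨n-1, hlast⟩ ≤ x i := hx (by rw [Fin.le_def]; simp; omega)
  have hmem : (⟨n-1, hlast⟩ : Fin n) ∈ tl n κ := mem_tl.mpr (by simp; omega)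
  have hsplit := Finset.sum_erase_add (tl n κ) x hmem
  have hrest : ∑ i ∈ (tl n κ).erase ⟨n-1, hlast⟩, x i ≤
      (((tl n κ).erase ⟨n-1, hlast⟩).card : ℝ) * x ⟨κ, hκ⟩ := by
    rw [← nsmul_eq_mul]
    apply Finset.sum_le_card_nsmul
    intro i hi
    exact hx (show (⟨κ, hκ⟩ : Fin n) ≤ i by
      rw [Fin.le_def]
      simpa using mem_tl.mp (Finset.mem_of_mem_erase hi))
  have hcard : ((((tl n κ).erase ⟨n-1, hlast⟩).card : ℕ) : ℝ) ≤ (n:ℝ) := by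
    have h2 : ((tl n κ).erase ⟨n-1, hlast⟩).card ≤ n := by
      refine le_trans (Finset.card_le_univ _) ?_
      simp
    exact_mod_cast h2
  have hrest2 : ∑ i ∈ (tl n κ).erase ⟨n-1, hlast⟩, x i ≤ (n:ℝ) * x ⟨κ, hκ⟩ :=
    le_trans hrest (mul_le_mul_of_nonneg_right hcard hκ0)
  linarith

lemma strictmono_rank {r : ℕ} (f : Fin r → Fin n) (hf : StrictMono f) {c₀ : ℕ}
    (hc : ∀ (h0 : 0 < r), c₀ ≤ (f ⟨0, h0⟩ : ℕ)) :
    ∀ (m : ℕ) (hm : m < r), c₀ + m ≤ (f ⟨m, hm⟩ : ℕ) := by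
  intro m
  induction m with
  | zero =>
    intro hm
    simpa using hc (by omega)
  | succ m IH =>
    intro hm
    have h1 := IH (by omega)
    have h2 : f ⟨m, by omega⟩ < f ⟨m+1, hm⟩ := hf (by rw [Fin.lt_def]; simp)
    rw [Fin.lt_def] at h2
    omega

lemma term_bound {x : Fin n → ℝ} (hx : Antitone x) {κ : ℕ} (hκ : κ < n)
    (hκ0 : 0 ≤ x ⟨κ, hκ⟩) (hlow : ∀ i : Fin n, -((n:ℝ) * x ⟨κ, hκ⟩) ≤ x i)
    {c₀ r : ℕ} (hcr : c₀ + r ≤ κ + 1)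
    {A : Finset (Fin n)} (hAcard : A.card = r) (hAmem : ∀ a ∈ A, c₀ ≤ (a:ℕ)) :
    |∏ i ∈ A, x i| ≤ (n:ℝ)^r * ∏ t ∈ Finset.range r, xx x (c₀ + t) := by
  classical
  set f := A.orderEmbOfFin hAcard with hf
  have hrank : ∀ (m : ℕ) (hm : m < r), c₀ + m ≤ (f ⟨m, hm⟩ : ℕ) := by
    apply strictmono_rank f (f.strictMono)
    intro h0
    exact hAmem _ (Finset.orderEmbOfFin_mem A hAcard ⟨0, h0⟩)
  have hAim : A = Finset.image f Finset.univ := by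
    ext a
    simp only [Finset.mem_image, Finset.mem_univ, true_and]
    constructor
    · intro ha
      have : a ∈ Set.range f := by rw [Finset.range_orderEmbOfFin]; exact ha
      obtain ⟨t, ht⟩ := this
      exact ⟨t, ht⟩
    · rintro ⟨t, rfl⟩
      exact Finset.orderEmbOfFin_mem A hAcard t
  have hinj : Function.Injective f := f.injective
  rw [hAim, Finset.prod_image (fun a _ b _ h => hinj h)]
  rw [Finset.abs_prod]
  have hbnd : ∀ t : Fin r, |x (f t)| ≤ (n:ℝ) * xx x (c₀ + (t:ℕ)) := by
    intro t
    have hct : c₀ + (t:ℕ) ≤ κ := by omega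
    have hctn : c₀ + (t:ℕ) < n := by omega
    rw [xx_eq x hctn]
    have hup : x (f t) ≤ x ⟨c₀ + (t:ℕ), hctn⟩ := by
      apply hx
      rw [Fin.le_def]
      simpa using hrank (t:ℕ) t.isLt
    have hxc : 0 ≤ x ⟨c₀ + (t:ℕ), hctn⟩ :=
      le_trans hκ0 (hx (by rw [Fin.le_def]; simpa using hct))
    have hdn : x ⟨κ, hκ⟩ ≤ x ⟨c₀ + (t:ℕ), hctn⟩ := hx (by rw [Fin.le_def]; simpa using hct)
    have hlo : -((n:ℝ) * x ⟨c₀ + (t:ℕ), hctn⟩) ≤ x (f t) := by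
      refine le_trans ?_ (hlow (f t))
      have hn0 : (0:ℝ) ≤ (n:ℝ) := Nat.cast_nonneg n
      nlinarith [hdn]
    have hn1 : (1:ℝ) ≤ (n:ℝ) := by
      have : 1 ≤ n := by omega
      exact_mod_cast this
    rw [abs_le]
    constructor
    · exact hlo
    · nlinarith [hup, hxc]
  calc ∏ t : Fin r, |x (f t)| ≤ ∏ t : Fin r, ((n:ℝ) * xx x (c₀ + (t:ℕ))) := by
        apply Finset.prod_le_prod
        · intro t _; positivity
        · intro t _; exact hbnd t
    _ = (n:ℝ)^r * ∏ t : Fin r, xx x (c₀ + (t:ℕ)) := by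
        rw [Finset.prod_mul_distrib, Finset.prod_const]
        simp
    _ = (n:ℝ)^r * ∏ t ∈ Finset.range r, xx x (c₀ + t) := by
        rw [Fin.prod_univ_eq_prod_range (fun t => xx x (c₀ + t)) r]

lemma E_abs_bound {x : Fin n → ℝ} (hx : Antitone x) {κ : ℕ} (hκ : κ < n)
    (hκ0 : 0 ≤ x ⟨κ, hκ⟩) (hlow : ∀ i : Fin n, -((n:ℝ) * x ⟨κ, hκ⟩) ≤ x i)
    {s : Finset (Fin n)} {c₀ r : ℕ} (hcr : c₀ + r ≤ κ + 1)
    (hsmem : ∀ a ∈ s, c₀ ≤ (a:ℕ)) :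
    |E x s r| ≤ (n:ℝ)^n * (n:ℝ)^r * ∏ t ∈ Finset.range r, xx x (c₀ + t) := by
  classical
  have hP : 0 ≤ ∏ t ∈ Finset.range r, xx x (c₀ + t) := by
    apply Finset.prod_nonneg
    intro t ht
    exact xx_nonneg hx hκ hκ0 (by have := Finset.mem_range.mp ht; omega)
  have h1 : |E x s r| ≤ ∑ A ∈ s.powersetCard r, |∏ i ∈ A, x i| := Finset.abs_sum_le_sum_abs _ _
  have h2 : ∀ A ∈ s.powersetCard r, |∏ i ∈ A, x i| ≤ (n:ℝ)^r * ∏ t ∈ Finset.range r, xx x (c₀+t) := by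
    intro A hA
    obtain ⟨hsub, hcard⟩ := Finset.mem_powersetCard.mp hA
    exact term_bound hx hκ hκ0 hlow hcr hcard (fun a ha => hsmem a (hsub ha))
  have h3 : ∑ A ∈ s.powersetCard r, |∏ i ∈ A, x i| ≤
      ((s.powersetCard r).card : ℝ) * ((n:ℝ)^r * ∏ t ∈ Finset.range r, xx x (c₀+t)) := by
    rw [← nsmul_eq_mul]
    exact Finset.sum_le_card_nsmul _ _ _ h2
  have h4 : ((s.powersetCard r).card : ℝ) ≤ (n:ℝ)^n := by
    have he : (s.powersetCard r).card = s.card.choose r := Finset.card_powersetCard r s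
    have h5 : s.card.choose r ≤ s.card ^ r := Nat.choose_le_pow s.card r
    have h6 : s.card ^ r ≤ n ^ n := by
      refine le_trans (Nat.pow_le_pow_left ?_ r) (Nat.pow_le_pow_right (by omega) (by omega))
      refine le_trans (Finset.card_le_univ s) (by simp)
    have h7 : (s.powersetCard r).card ≤ n ^ n := by omega
    calc ((s.powersetCard r).card : ℝ) ≤ ((n^n : ℕ) : ℝ) := by exact_mod_cast h7
      _ = (n:ℝ)^n := by push_cast; ring
  calc |E x s r| ≤ ((s.powersetCard r).card : ℝ) * ((n:ℝ)^r * ∏ t ∈ Finset.range r, xx x (c₀+t)) :=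
        le_trans h1 h3
    _ ≤ (n:ℝ)^n * ((n:ℝ)^r * ∏ t ∈ Finset.range r, xx x (c₀+t)) := by
        apply mul_le_mul_of_nonneg_right h4 (by positivity)
    _ = (n:ℝ)^n * (n:ℝ)^r * ∏ t ∈ Finset.range r, xx x (c₀+t) := by ring

lemma E_zero_entries {x : Fin n → ℝ} {s : Finset (Fin n)} (h : ∀ i ∈ s, x i = 0) {l : ℕ}
    (hl : 1 ≤ l) : E x s l = 0 := by
  apply Finset.sum_eq_zero
  intro A hA
  obtain ⟨hsub, hcard⟩ := Finset.mem_powersetCard.mp hA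
  obtain ⟨a, ha⟩ := Finset.card_pos.mp (by omega : 0 < A.card)
  exact Finset.prod_eq_zero ha (h a (hsub ha))

def Pj (n ρ : ℕ) (δ : ℝ) (j : ℕ) (c : ℝ) : Prop :=
  ∀ (x : Fin n → ℝ), Antitone x → ∀ (hj : j + ρ + 2 ≤ n),
    (∀ i : Fin n, (i:ℕ) ≤ j → x i = 1) → δ ≤ x ⟨j + ρ + 1, by omega⟩ →
    (∀ l, 1 ≤ l → l ≤ ρ + 2 → 0 ≤ E x (tl n j) l) →
    c ≤ E x ((tl n j).erase ⟨j + ρ + 1, by omega⟩) (ρ + 1)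

lemma compact_min_j (ρ : ℕ) (δ : ℝ) (hδ : 0 < δ) (hδ1 : δ ≤ 1) (j : ℕ) :
    ∃ c : ℝ, 0 < c ∧ Pj n ρ δ j c := by
  classical
  by_cases hj : j + ρ + 2 ≤ n
  swap
  · exact ⟨1, one_pos, fun x _ hj2 _ _ _ => absurd hj2 hj⟩
  have hκ : j + ρ + 1 < n := by omega
  set κ : Fin n := ⟨j + ρ + 1, hκ⟩ with hκdef
  set K : Set (Fin n → ℝ) :=
    {x | Antitone x} ∩ {x | ∀ i : Fin n, (i:ℕ) ≤ j → x i = 1} ∩ {x | δ ≤ x κ} ∩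
      {x | ∀ l, 1 ≤ l → l ≤ ρ + 2 → 0 ≤ E x (tl n j) l} with hKdef
  have hclosed : IsClosed K := by
    apply IsClosed.inter
    apply IsClosed.inter
    apply IsClosed.inter
    · have heq : {x : Fin n → ℝ | Antitone x}
          = ⋂ (p : Fin n × Fin n) (_ : p.1 ≤ p.2), {x : Fin n → ℝ | x p.2 ≤ x p.1} := by
        ext x
        simp only [Set.mem_setOf_eq, Set.mem_iInter]
        exact ⟨fun h p hp => h hp, fun h a b hab => h (a, b) hab⟩
      rw [heq]
      exact isClosed_iInter fun p => isClosed_iInter fun _ =>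
        isClosed_le (continuous_apply p.2) (continuous_apply p.1)
    · have heq : {x : Fin n → ℝ | ∀ i : Fin n, (i:ℕ) ≤ j → x i = 1}
          = ⋂ (i : Fin n) (_ : (i:ℕ) ≤ j), {x : Fin n → ℝ | x i = 1} := by
        ext x
        simp only [Set.mem_setOf_eq, Set.mem_iInter]
      rw [heq]
      exact isClosed_iInter fun i => isClosed_iInter fun _ =>
        isClosed_eq (continuous_apply i) continuous_const
    · exact isClosed_le continuous_const (continuous_apply κ)
    · have heq : {x : Fin n → ℝ | ∀ l, 1 ≤ l → l ≤ ρ + 2 → 0 ≤ E x (tl n j) l}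
          = ⋂ (l : ℕ) (_ : 1 ≤ l) (_ : l ≤ ρ + 2), {x : Fin n → ℝ | 0 ≤ E x (tl n j) l} := by
        ext x
        simp only [Set.mem_setOf_eq, Set.mem_iInter]
      rw [heq]
      exact isClosed_iInter fun l => isClosed_iInter fun _ => isClosed_iInter fun _ =>
        isClosed_le continuous_const (E_continuous _ _)
  have hsub : K ⊆ Metric.closedBall 0 ((n:ℝ)+1) := by
    rintro x ⟨⟨⟨hanti, hone⟩, hδx⟩, hE⟩
    rw [Metric.mem_closedBall, dist_zero_right]
    rw [pi_norm_le_iff_of_nonneg (by positivity)]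
    intro i
    rw [Real.norm_eq_abs, abs_le]
    have hjn : j < n := by omega
    have hxj1 : x ⟨j, hjn⟩ = 1 := hone _ (by simp)
    have hup : x i ≤ 1 := by
      rcases le_or_gt (i:ℕ) j with h | h
      · rw [hone i h]
      · rw [← hxj1]
        exact hanti (by rw [Fin.le_def]; simp; omega)
    have hsum : 0 ≤ ∑ i ∈ tl n j, x i := by
      rw [← E_one]
      exact hE 1 le_rfl (by omega)
    have hlow := lowbound hanti hjn (by rw [hxj1]; norm_num) hsum i
    rw [hxj1, mul_one] at hlow
    constructor
    · linarith
    · have h9 : (1:ℝ) ≤ (n:ℝ) + 1 := by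
        have : (0:ℝ) ≤ (n:ℝ) := Nat.cast_nonneg n
        linarith
      linarith
  have hcompact : IsCompact K :=
    IsCompact.of_isClosed_subset (isCompact_closedBall 0 _) hclosed hsub
  have hne : K.Nonempty := by
    refine ⟨fun _ => 1, ?_⟩
    refine ⟨⟨⟨antitone_const, fun i _ => rfl⟩, hδ1⟩, fun l _ _ => E_nonneg (fun i _ => zero_le_one) l⟩
  obtain ⟨z, hzK, hzmin⟩ := hcompact.exists_isMinOn hne
    ((E_continuous ((tl n j).erase κ) (ρ+1)).continuousOn)
  obtain ⟨⟨⟨hzanti, hzone⟩, hzδ⟩, hzE⟩ := hzK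
  have hzpos : 0 < E z ((tl n j).erase κ) (ρ+1) := by
    have hF := F1 (ρ+1) z hzanti j (by omega) (fun l h1 h2 => hzE l h1 h2)
      (by rw [show (⟨j + (ρ+1), by omega⟩ : Fin n) = κ from fmk _ _ (by omega)]
          exact lt_of_lt_of_le hδ hzδ)
    rwa [show (⟨j + (ρ+1), by omega⟩ : Fin n) = κ from fmk _ _ (by omega)] at hF
  refine ⟨E z ((tl n j).erase κ) (ρ+1), hzpos, ?_⟩
  intro x hxanti hj2 hxone hxδ hxE
  exact hzmin ⟨⟨⟨hxanti, hxone⟩, hxδ⟩, hxE⟩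

lemma compact_min (ρ : ℕ) (δ : ℝ) (hδ : 0 < δ) (hδ1 : δ ≤ 1) :
    ∃ c : ℝ, 0 < c ∧ ∀ j : ℕ, Pj n ρ δ j c := by
  classical
  choose cf hcf1 hcf2 using fun j => compact_min_j (n := n) ρ δ hδ hδ1 j
  refine ⟨(Finset.range (n+1)).inf' (Finset.nonempty_range_iff.mpr (Nat.succ_ne_zero n)) cf, ?_, ?_⟩
  · rw [Finset.lt_inf'_iff]
    intro b _
    exact hcf1 b
  · intro j
    intro x hxa hj2 hone hδx hE
    refine le_trans ?_ (hcf2 j x hxa hj2 hone hδx hE)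
    apply Finset.inf'_le
    simp
    omega

theorem LTstar (ρ : ℕ) : ∃ c : ℝ, 0 < c ∧ ∀ (x : Fin n → ℝ), Antitone x →
    ∀ (j : ℕ) (hj : j + ρ + 1 ≤ n),
    (∀ l, 1 ≤ l → l ≤ ρ + 1 → 0 ≤ E x (tl n j) l) →
    c * ∏ t ∈ Finset.range ρ, xx x (j+t) ≤ E x ((tl n j).erase ⟨j + ρ, by omega⟩) ρ := by
  induction ρ with
  | zero =>
    refine ⟨1, one_pos, ?_⟩
    intro x hx j hj h
    rw [E_zero]
    simp
  | succ ρ IH =>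
    obtain ⟨c, hc, hLT⟩ := IH
    set B : ℝ := (n:ℝ)^n * (n:ℝ)^(ρ+1) with hBdef
    have hB0 : 0 ≤ B := by positivity
    set δ : ℝ := min 1 (c / (2*(B+1))) with hδdef
    have hδpos : 0 < δ := by
      apply lt_min one_pos
      positivity
    have hδ1 : δ ≤ 1 := min_le_left _ _
    have hδB : B * δ ≤ c / 2 := by
      have h1 : δ ≤ c / (2*(B+1)) := min_le_right _ _
      have h2 : B * δ ≤ B * (c / (2*(B+1))) := mul_le_mul_of_nonneg_left h1 hB0
      have h3 : B * (c / (2*(B+1))) ≤ c / 2 := by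
        have e : B * (c / (2*(B+1))) = (B*c) / (2*(B+1)) := by ring
        rw [e, div_le_div_iff₀ (by positivity) (by norm_num : (0:ℝ) < 2)]
        nlinarith [hc, hB0]
      linarith
    obtain ⟨c2, hc2, hPj⟩ := compact_min (n := n) ρ δ hδpos hδ1
    refine ⟨min (c/2) c2, by positivity, ?_⟩
    intro x hx j hj h
    have hκn : j + ρ + 1 < n := by omega
    have hjn : j < n := by omega
    set κ : Fin n := ⟨j + ρ + 1, hκn⟩ with hκdef
    have hgoalidx : (⟨j + (ρ+1), by omega⟩ : Fin n) = κ := fmk _ _ (by omega)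
    rw [hgoalidx]
    -- basic facts
    have hZ : 0 ≤ x κ := by
      have := Zlem (ρ+1) x hx j (by omega) h
      rwa [show (⟨j + (ρ+1), by omega⟩ : Fin n) = κ from fmk _ _ (by omega)] at this
    have hS : 0 ≤ ∑ i ∈ tl n (j + ρ + 1), x i := by
      have := Slem (ρ+1) x hx j (by omega) h
      rwa [show j + (ρ+1) = j + ρ + 1 from by omega] at this
    have hlow : ∀ i : Fin n, -((n:ℝ) * x κ) ≤ x i := lowbound hx hκn hZ hS
    rcases le_or_gt (x ⟨j, hjn⟩) 0 with hxj | hxj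
    · -- degenerate zero tail
      have hsum : 0 ≤ ∑ i ∈ tl n j, x i := by
        rw [← E_one]; exact h 1 le_rfl (by omega)
      have hz := tail_zero_of_nonpos hx hjn hxj hsum
      have hE0 : E x ((tl n j).erase κ) (ρ+1) = 0 := by
        apply E_zero_entries _ (by omega)
        intro i hi
        exact hz i (Finset.mem_of_mem_erase hi)
      have hP0 : ∏ t ∈ Finset.range (ρ+1), xx x (j+t) = 0 := by
        apply Finset.prod_eq_zero (Finset.mem_range.mpr (by omega : 0 < ρ+1))
        rw [show j + 0 = j from by omega, xx_eq x hjn]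
        exact hz _ (mem_tl.mpr le_rfl)
      rw [hE0, hP0, mul_zero]
    · -- x j > 0
      have h' : ∀ l, l ≤ ρ + 2 → 0 ≤ E x (tl n j) l := by
        intro l hl
        rcases Nat.eq_zero_or_pos l with rfl | hp
        · rw [E_zero]; exact zero_le_one
        · exact h l hp (by omega)
      have hjmem : (⟨j, hjn⟩ : Fin n) ∈ tl n j := mem_tl.mpr le_rfl
      have hB1 := Bstar hjmem hxj h'
      rw [tl_erase_self hjn] at hB1
      -- products
      set Q : ℝ := ∏ t ∈ Finset.range ρ, xx x (j+1+t) with hQdef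
      have hQ0 : 0 ≤ Q := by
        apply Finset.prod_nonneg
        intro t ht
        exact xx_nonneg hx hκn hZ (by have := Finset.mem_range.mp ht; omega)
      have hPgoal : ∏ t ∈ Finset.range (ρ+1), xx x (j+t) = xx x j * Q := by
        rw [Finset.prod_range_succ']
        rw [show j + 0 = j from by omega]
        rw [mul_comm]
        congr 1
        apply Finset.prod_congr rfl
        intro t _
        congr 1
        omega
      have hxxj : xx x j = x ⟨j, hjn⟩ := xx_eq x hjn
      rcases le_or_gt (x κ) (δ * x ⟨j, hjn⟩) with hreg | hreg
      · -- Regime I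
        have hIH := hLT x hx (j+1) (by omega) (fun l h1 h2 => hB1 l (by omega))
        rw [show (⟨j + 1 + ρ, by omega⟩ : Fin n) = κ from fmk _ _ (by omega)] at hIH
        have hjem : (⟨j, hjn⟩ : Fin n) ∈ (tl n j).erase κ := by
          rw [Finset.mem_erase]
          exact ⟨by intro he; have := congrArg Fin.val he; simp [hκdef] at this; omega, hjmem⟩
        have hpeel := E_peel x hjem ρ
        rw [tl_erase_erase hjn κ] at hpeel
        have hT1 : |E x ((tl n (j+1)).erase κ) (ρ+1)| ≤
            B * ∏ t ∈ Finset.range (ρ+1), xx x (j+1+t) := by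
          have := E_abs_bound hx hκn hZ hlow (s := (tl n (j+1)).erase κ)
            (c₀ := j+1) (r := ρ+1) (by omega)
            (fun a ha => mem_tl.mp (Finset.mem_of_mem_erase ha))
          rwa [← hBdef] at this
        have hsplit : ∏ t ∈ Finset.range (ρ+1), xx x (j+1+t) = Q * x κ := by
          rw [Finset.prod_range_succ, ← hQdef]
          congr 1
          rw [xx_eq x (show j+1+ρ < n by omega)]
          exact congrArg x (fmk _ _ (by omega))
        rw [hsplit] at hT1
        have hEρ : c * Q ≤ E x ((tl n (j+1)).erase κ) ρ := hIH
        have hlower : -(B * (Q * x κ)) ≤ E x ((tl n (j+1)).erase κ) (ρ+1) := by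
          have := abs_le.mp hT1
          linarith [this.1]
        have hxκδ : B * (Q * x κ) ≤ (c/2) * (Q * x ⟨j, hjn⟩) := by
          have h1 : Q * x κ ≤ Q * (δ * x ⟨j, hjn⟩) := mul_le_mul_of_nonneg_left hreg hQ0
          have h2 : B * (Q * x κ) ≤ B * (Q * (δ * x ⟨j, hjn⟩)) :=
            mul_le_mul_of_nonneg_left h1 hB0
          have h3 : B * (Q * (δ * x ⟨j, hjn⟩)) = (B * δ) * (Q * x ⟨j, hjn⟩) := by ring
          have h4 : (B * δ) * (Q * x ⟨j, hjn⟩) ≤ (c/2) * (Q * x ⟨j, hjn⟩) := by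
            apply mul_le_mul_of_nonneg_right hδB
            exact mul_nonneg hQ0 hxj.le
          linarith
        calc min (c/2) c2 * (∏ t ∈ Finset.range (ρ+1), xx x (j+t))
            = min (c/2) c2 * (x ⟨j, hjn⟩ * Q) := by rw [hPgoal, hxxj]
          _ ≤ (c/2) * (x ⟨j, hjn⟩ * Q) := by
              apply mul_le_mul_of_nonneg_right (min_le_left _ _)
              exact mul_nonneg hxj.le hQ0
          _ = c * (x ⟨j, hjn⟩ * Q) - (c/2) * (Q * x ⟨j, hjn⟩) := by ring
          _ ≤ c * (x ⟨j, hjn⟩ * Q) - B * (Q * x κ) := by linarith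
          _ = x ⟨j, hjn⟩ * (c * Q) + (-(B * (Q * x κ))) := by ring
          _ ≤ x ⟨j, hjn⟩ * E x ((tl n (j+1)).erase κ) ρ
                + E x ((tl n (j+1)).erase κ) (ρ+1) := by
              have := mul_le_mul_of_nonneg_left hEρ hxj.le
              linarith
          _ = E x ((tl n j).erase κ) (ρ+1) := by rw [hpeel]; ring
      · -- Regime II
        set ξ : ℝ := x ⟨j, hjn⟩ with hξ
        set y : Fin n → ℝ := fun i => min (x i * ξ⁻¹) 1 with hy
        have hξpos : 0 < ξ := hxj
        have hyanti : Antitone y := by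
          apply Antitone.min _ antitone_const
          intro a b hab
          exact mul_le_mul_of_nonneg_right (hx hab) (inv_nonneg.mpr hξpos.le)
        have hyone : ∀ i : Fin n, (i:ℕ) ≤ j → y i = 1 := by
          intro i hi
          apply min_eq_right
          rw [← div_eq_mul_inv, le_div_iff₀ hξpos, one_mul]
          exact hx (by rw [Fin.le_def]; simpa using hi)
        have hytail : ∀ i ∈ tl n j, y i = ξ⁻¹ * x i := by
          intro i hi
          rw [hy]
          simp only
          rw [min_eq_left, mul_comm]
          rw [← div_eq_mul_inv, div_le_one hξpos]
          exact hx (by rw [Fin.le_def]; simpa using mem_tl.mp hi)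
        have hyδ : δ ≤ y κ := by
          apply le_min _ hδ1
          rw [← div_eq_mul_inv, le_div_iff₀ hξpos]
          linarith
        have hyE : ∀ l, 1 ≤ l → l ≤ ρ + 2 → 0 ≤ E y (tl n j) l := by
          intro l h1 h2
          rw [E_congr hytail l, E_smul]
          have := h' l h2
          positivity
        have hy2 := hPj j y hyanti (by omega) hyone
          (by rwa [show (⟨j + ρ + 1, by omega⟩ : Fin n) = κ from fmk _ _ rfl]) hyE
        rw [show (⟨j + ρ + 1, by omega⟩ : Fin n) = κ from fmk _ _ rfl] at hy2
        have hyer : E y ((tl n j).erase κ) (ρ+1) = (ξ⁻¹)^(ρ+1) * E x ((tl n j).erase κ) (ρ+1) := by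
          rw [E_congr (fun i hi => hytail i (Finset.mem_of_mem_erase hi)) (ρ+1), E_smul]
        rw [hyer] at hy2
        have hEx : c2 * ξ^(ρ+1) ≤ E x ((tl n j).erase κ) (ρ+1) := by
          have h5 := mul_le_mul_of_nonneg_right hy2 (by positivity : (0:ℝ) ≤ ξ^(ρ+1))
          have h6 : (ξ⁻¹)^(ρ+1) * E x ((tl n j).erase κ) (ρ+1) * ξ^(ρ+1)
              = E x ((tl n j).erase κ) (ρ+1) * ((ξ⁻¹ * ξ)^(ρ+1)) := by
            rw [mul_pow]; ring
          rw [h6, inv_mul_cancel₀ hξpos.ne', one_pow, mul_one] at h5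
          linarith
        have hprodle : ∏ t ∈ Finset.range (ρ+1), xx x (j+t) ≤ ξ^(ρ+1) := by
          have h7 : ∏ t ∈ Finset.range (ρ+1), xx x (j+t) ≤ ∏ _t ∈ Finset.range (ρ+1), ξ := by
            apply Finset.prod_le_prod
            · intro t ht
              exact xx_nonneg hx hκn hZ (by have := Finset.mem_range.mp ht; omega)
            · intro t ht
              rw [xx_eq x (show j + t < n by have := Finset.mem_range.mp ht; omega)]
              exact hx (by rw [Fin.le_def]; simp)
          rwa [Finset.prod_const, Finset.card_range] at h7
        have hprod0 : 0 ≤ ∏ t ∈ Finset.range (ρ+1), xx x (j+t) := by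
          apply Finset.prod_nonneg
          intro t ht
          exact xx_nonneg hx hκn hZ (by have := Finset.mem_range.mp ht; omega)
        calc min (c/2) c2 * ∏ t ∈ Finset.range (ρ+1), xx x (j+t)
            ≤ c2 * ξ^(ρ+1) := by
              apply mul_le_mul (min_le_right _ _) hprodle hprod0 hc2.le
          _ ≤ E x ((tl n j).erase κ) (ρ+1) := hEx

end NA

open NA

/-- For x ∈ Γₖⁿ decreasing, s_{k-1}(x|k) ≥ C·s_{k-1}(x) with C depending only on n, k. -/
theorem esymm_update_k_lower_bound (n k : ℕ) (hk : 1 ≤ k) (hkn : k ≤ n) :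
    ∃ C : ℝ, 0 < C ∧ ∀ x : Fin n → ℝ, GammaK n k x → Antitone x →
      esymm n (k - 1) (Function.update x ⟨k - 1, by omega⟩ 0) ≥ C * esymm n (k - 1) x := by
  classical
  have hesymmE : ∀ (y : Fin n → ℝ) (l : ℕ), esymm n l y = E y univ l := fun _ _ => rfl
  rcases Nat.lt_or_ge k 2 with hk2 | hk2
  · -- k = 1
    have hk1 : k = 1 := by omega
    subst hk1
    refine ⟨1, one_pos, ?_⟩
    intro x _ _
    simp only [Nat.sub_self]
    rw [ge_iff_le, one_mul, hesymmE, hesymmE, E_zero, E_zero]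
  · -- k ≥ 2
    obtain ⟨m, rfl⟩ : ∃ m, k = m + 2 := ⟨k - 2, by omega⟩
    obtain ⟨c, hc, hLT⟩ := LTstar (n := n) (m+1)
    set B2 : ℝ := (n:ℝ)^n * (n:ℝ)^m with hB2def
    have hB20 : 0 ≤ B2 := by positivity
    refine ⟨c / (c + B2 + 1), by positivity, ?_⟩
    intro x hΓ hx
    have hKn : m + 1 < n := by omega
    set K : Fin n := ⟨m+1, hKn⟩ with hKdef
    have h0 : ∀ l, 1 ≤ l → l ≤ (m+1) + 1 → 0 ≤ E x (tl n 0) l := by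
      intro l h1 h2
      rw [tl_zero, ← hesymmE]
      exact (hΓ l h1 (by omega)).le
    -- x K ≥ 0
    have hZ : 0 ≤ x K := by
      have := Zlem (m+1) x hx 0 (by omega) h0
      rwa [show (⟨0 + (m+1), by omega⟩ : Fin n) = K from fmk _ _ (by omega)] at this
    have hS : 0 ≤ ∑ i ∈ tl n (m+1), x i := by
      have := Slem (m+1) x hx 0 (by omega) h0
      rwa [show 0 + (m+1) = m+1 from by omega] at this
    -- x K > 0 strictly
    have hKpos : 0 < x K := by
      rcases lt_or_eq_of_le hZ with h | h
      · exact h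
      exfalso
      have hzero := tail_zero_of_nonpos hx hKn (by rw [← h]) hS
      have hEk : E x univ (m+2) = 0 := by
        apply Finset.sum_eq_zero
        intro A hA
        obtain ⟨hsub, hcard⟩ := Finset.mem_powersetCard.mp hA
        have hexists : ∃ a ∈ A, m + 1 ≤ (a:ℕ) := by
          by_contra hcon
          push_neg at hcon
          have hsub2 : A ⊆ univ.filter (fun i : Fin n => (i:ℕ) < m+1) := by
            intro a ha
            rw [Finset.mem_filter]
            exact ⟨Finset.mem_univ a, by have := hcon a ha; omega⟩
          have hcard2 : (univ.filter (fun i : Fin n => (i:ℕ) < m+1)).card ≤ m+1 := by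
            refine le_trans (Finset.card_le_card_of_injOn (fun a : Fin n => (a:ℕ))
              (fun a ha => Finset.mem_range.mpr (Finset.mem_filter.mp ha).2)
              (fun a _ b _ h => Fin.val_injective h)) ?_
            simp
          have := Finset.card_le_card hsub2
          omega
        obtain ⟨a, haA, ha⟩ := hexists
        apply Finset.prod_eq_zero haA
        exact hzero a (mem_tl.mpr ha)
      have := hΓ (m+2) (by omega) (le_rfl)
      rw [hesymmE] at this
      linarith
    have hlow := lowbound hx hKn hZ hS
    -- LTstar at j = 0
    have hLT0 := hLT x hx 0 (by omega) h0
    rw [show (⟨0 + (m+1), by omega⟩ : Fin n) = K from fmk _ _ (by omega), tl_zero] at hLT0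
    set f : ℝ := E x (univ.erase K) (m+1) with hfdef
    set P : ℝ := ∏ t ∈ Finset.range (m+1), xx x (0+t) with hPdef
    have hfP : c * P ≤ f := hLT0
    have hP0 : 0 ≤ P := by
      apply Finset.prod_nonneg
      intro t ht
      exact xx_nonneg hx hKn hZ (by have := Finset.mem_range.mp ht; omega)
    have hf0 : 0 ≤ f := le_trans (by positivity) hfP
    -- peel identity for esymm (m+1)
    have hpeel := E_peel x (Finset.mem_univ K) m
    -- T2 bound
    have hT2 : |E x (univ.erase K) m| ≤ B2 * ∏ t ∈ Finset.range m, xx x (0 + t) := by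
      have := E_abs_bound hx hKn hZ hlow (s := univ.erase K) (c₀ := 0) (r := m)
        (by omega) (fun a _ => Nat.zero_le _)
      rwa [← hB2def] at this
    have hPsplit : P = (∏ t ∈ Finset.range m, xx x (0 + t)) * xx x m := by
      rw [hPdef, Finset.prod_range_succ, show 0 + m = m from by omega]
    have hxKm : x K ≤ xx x m := by
      rw [xx_eq x (show m < n by omega)]
      exact hx (by rw [Fin.le_def]; simp [hKdef])
    have hQ0 : 0 ≤ ∏ t ∈ Finset.range m, xx x (0 + t) := by
      apply Finset.prod_nonneg
      intro t ht
      exact xx_nonneg hx hKn hZ (by have := Finset.mem_range.mp ht; omega)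
    have hterm : x K * E x (univ.erase K) m ≤ B2 * P := by
      have h1 : x K * E x (univ.erase K) m ≤ x K * |E x (univ.erase K) m| := by
        apply mul_le_mul_of_nonneg_left (le_abs_self _) hKpos.le
      have h2 : x K * |E x (univ.erase K) m| ≤ x K * (B2 * ∏ t ∈ Finset.range m, xx x (0+t)) :=
        mul_le_mul_of_nonneg_left hT2 hKpos.le
      have h3 : x K * (B2 * ∏ t ∈ Finset.range m, xx x (0+t)) ≤ B2 * P := by
        rw [hPsplit]
        have h4 : x K * (∏ t ∈ Finset.range m, xx x (0+t)) ≤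
            (∏ t ∈ Finset.range m, xx x (0+t)) * xx x m := by
          rw [mul_comm]
          exact mul_le_mul_of_nonneg_left hxKm hQ0
        nlinarith [h4, hB20]
      linarith
    have hσ : E x univ (m+1) ≤ f + B2 * P := by
      rw [hpeel, ← hfdef]
      linarith
    -- the update equals f
    have hupdate : esymm n (m+1) (Function.update x K 0) = f := by
      rw [hesymmE, E_peel (Function.update x K 0) (Finset.mem_univ K) m]
      rw [Function.update_self, zero_mul, add_zero]
      apply E_congr
      intro i hi
      rw [Function.update_of_ne (Finset.ne_of_mem_erase hi)]
    -- final algebra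
    show esymm n (m+1) (Function.update x K 0) ≥ c / (c + B2 + 1) * esymm n (m+1) x
    rw [ge_iff_le, hesymmE, hupdate]
    have hPf : P ≤ f / c := by
      rw [le_div_iff₀ hc]
      linarith [hfP]
    have hσ2 : E x univ (m+1) ≤ f * (1 + B2 / c) := by
      have : B2 * P ≤ B2 * (f / c) := mul_le_mul_of_nonneg_left hPf hB20
      calc E x univ (m+1) ≤ f + B2 * P := hσ
        _ ≤ f + B2 * (f / c) := by linarith
        _ = f * (1 + B2 / c) := by ring
    have hCpos : (0:ℝ) < c + B2 + 1 := by positivity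
    rw [div_mul_eq_mul_div, div_le_iff₀ hCpos]
    calc c * E x univ (m+1) ≤ c * (f * (1 + B2/c)) := by
          apply mul_le_mul_of_nonneg_left hσ2 hc.le
      _ = f * (c + B2) := by field_simp
      _ ≤ f * (c + B2 + 1) := by nlinarith [hf0]
end

section
/- Let (λ, y) ∈ Γ_{n-1}^{n+m} with λ_1 ≥ λ_2 ≥ ... ≥ λ_n, where y = (y_1,...,y_m) with Σ y_i = a_1 ≥ 0. If λ_n < −λ_1/(n−1), then λ_{n-1} > λ_1/(n−1) − a_1; in particular λ_{n-1} > 0 once λ_1 > (n−1)·a_1. -/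
open Finset

/-!
Let `Z` be the multiset of entries of `(λ, y)` and `P_Z = ∏_{z ∈ Z} (X + z)`, whose
coefficients are the `σ_l(Z)`. For `k ≤ |Z|` and `j = |Z| - k`, the `j`-th derivative of `P_Z`
has degree `k`, is real-rooted by Rolle, and its coefficients are positive multiples of
`σ_k(Z), …, σ_0(Z)`; so `Z ∈ Γ_k` iff all its roots are negative. Removing an entry `a`
divides `P_Z` by `X + a`, which cannot move the largest root of the `j`-th derivative to the
right; hence `Z \ {a} ∈ Γ_{k-1}`. Removing `λ_1, …, λ_{n-2}` from `Z ∈ Γ_{n-1}` thus leaves a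
multiset in `Γ_1`, i.e. `λ_{n-1} + λ_n + a_1 > 0`, and both claims follow from
`λ_n < -λ_1/(n-1)`.
-/

open Polynomial

namespace Polynomial

section Semiring

variable {R : Type*} [Semiring R] [IsAddTorsionFree R]

theorem natDegree_iterate_derivative_eq (p : R[X]) (j : ℕ) :
    (derivative^[j] p).natDegree = p.natDegree - j := by
  induction j with
  | zero => rfl
  | succ j ih => rw [Function.iterate_succ_apply', natDegree_derivative, ih]; omega

end Semiring

theorem iterate_derivative_X_sub_C_mul {R : Type*} [CommRing R] (r : R) (p : R[X]) (j : ℕ) :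
    derivative^[j + 1] ((X - C r) * p) =
      (X - C r) * derivative^[j + 1] p + ((j + 1 : ℕ) : R[X]) * derivative^[j] p := by
  rw [sub_mul, mul_comm X, iterate_derivative_sub, iterate_derivative_mul_X,
    iterate_derivative_C_mul, nsmul_eq_mul, Nat.add_sub_cancel]
  ring

variable {f : ℝ[X]}

theorem eval_pos_of_coeff_nonneg {p : ℝ[X]} (hp : ∀ i, 0 ≤ p.coeff i) (h0 : 0 < p.coeff 0)
    {x : ℝ} (hx : 0 ≤ x) : 0 < p.eval x := by
  rw [eval_eq_sum_range]
  exact Finset.sum_pos' (fun i _ => mul_nonneg (hp i) (pow_nonneg hx i))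
    ⟨0, Finset.mem_range.2 (Nat.succ_pos _), by simpa using h0⟩

theorem leadingCoeff_iterate_derivative_pos (hf : 0 < f.leadingCoeff) {j : ℕ}
    (hj : j ≤ f.natDegree) : 0 < (derivative^[j] f).leadingCoeff := by
  induction j with
  | zero => exact hf
  | succ j ih =>
    rw [Function.iterate_succ_apply', leadingCoeff_derivative, natDegree_iterate_derivative_eq]
    exact mul_pos (ih (by omega)) (Nat.cast_pos.2 (by omega))

theorem Splits.derivative (hf : f.Splits) : f.derivative.Splits := by
  rw [splits_iff_card_roots] at hf ⊢
  refine le_antisymm (card_roots' _) ?_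
  have := card_roots_le_derivative f
  rw [natDegree_derivative]
  omega

theorem Splits.iterate_derivative (hf : f.Splits) (j : ℕ) :
    (Polynomial.derivative^[j] f).Splits := by
  induction j with
  | zero => exact hf
  | succ j ih => rw [Function.iterate_succ_apply']; exact ih.derivative

theorem Splits.eval_pos_of_roots_lt (hf : f.Splits) (hlc : 0 < f.leadingCoeff) {x : ℝ}
    (hx : ∀ ρ ∈ f.roots, ρ < x) : 0 < f.eval x := by
  rw [hf.eval_eq_prod_roots]
  refine mul_pos hlc (Multiset.prod_pos fun d hd => ?_)
  obtain ⟨ρ, hρ, rfl⟩ := Multiset.mem_map.1 hd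
  exact sub_pos.2 (hx ρ hρ)

theorem Splits.eval_derivative_pos_of_roots_lt (hf : f.Splits) (hlc : 0 < f.leadingCoeff)
    (hdeg : f.natDegree ≠ 0) {x : ℝ} (hx : ∀ ρ ∈ f.roots, ρ < x) :
    0 < f.derivative.eval x := by
  have hfx := hf.eval_pos_of_roots_lt hlc hx
  rw [hf.eval_derivative_eq_eval_mul_sum hfx.ne']
  obtain ⟨ρ, hρ⟩ := Multiset.exists_mem_of_ne_zero (hf.roots_ne_zero hdeg)
  have hterm : ∀ d ∈ f.roots.map fun z ↦ 1 / (x - z), 0 < d := by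
    intro d hd
    obtain ⟨z, hz, rfl⟩ := Multiset.mem_map.1 hd
    exact one_div_pos.2 (sub_pos.2 (hx z hz))
  refine mul_pos hfx (lt_of_lt_of_le (hterm _ (Multiset.mem_map_of_mem _ hρ)) ?_)
  exact Multiset.single_le_sum (fun d hd => (hterm d hd).le) _ (Multiset.mem_map_of_mem _ hρ)

theorem Splits.eval_nonpos_of_max_root_derivative (hf : f.Splits) (hlc : 0 < f.leadingCoeff)
    {s : ℝ} (hs : s ∈ f.derivative.roots) (hmax : ∀ ρ ∈ f.derivative.roots, ρ ≤ s) :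
    f.eval s ≤ 0 := by
  have hf' : f.derivative ≠ 0 := ne_zero_of_mem_roots hs
  have hdeg : f.natDegree ≠ 0 := derivative_ne_zero.1 hf'
  by_cases hroot : ∃ b ∈ f.roots, s ≤ b
  swap
  · have := hf.eval_derivative_pos_of_roots_lt hlc hdeg fun ρ hρ => lt_of_not_ge fun h =>
      hroot ⟨ρ, hρ, h⟩
    rw [(isRoot_of_mem_roots hs).eq_zero] at this
    exact (lt_irrefl 0 this).elim
  obtain ⟨b, hb, hsb⟩ := hroot
  have hlc' : 0 < f.derivative.leadingCoeff := by
    rw [leadingCoeff_derivative]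
    exact mul_pos hlc (by exact_mod_cast Nat.pos_of_ne_zero hdeg)
  have hmono : MonotoneOn f.eval (Set.Ici s) := by
    refine (strictMonoOn_of_deriv_pos (convex_Ici s) f.continuousOn fun x hx => ?_).monotoneOn
    rw [interior_Ici] at hx
    rw [Polynomial.deriv]
    exact hf.derivative.eval_pos_of_roots_lt hlc' fun ρ hρ => (hmax ρ hρ).trans_lt hx
  calc f.eval s ≤ f.eval b := hmono Set.self_mem_Ici hsb hsb
    _ = 0 := (isRoot_of_mem_roots hb).eq_zero

theorem Splits.roots_iterate_derivative_lt_of_X_sub_C_mul {g : ℝ[X]} (hg : g.Splits)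
    (hlc : 0 < g.leadingCoeff) (r : ℝ) (j : ℕ) {c : ℝ}
    (h : ∀ ρ ∈ (Polynomial.derivative^[j] ((X - C r) * g)).roots, ρ < c) :
    ∀ ρ ∈ (Polynomial.derivative^[j] g).roots, ρ < c := by
  intro ρ₀ hρ₀
  cases j with
  | zero =>
    have hg0 : g ≠ 0 := leadingCoeff_ne_zero.1 hlc.ne'
    exact h ρ₀ (Multiset.mem_of_le (roots.le_of_dvd (mul_ne_zero (X_sub_C_ne_zero r) hg0)
      (dvd_mul_left g _)) hρ₀)
  | succ j =>
    by_contra! hcρ₀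
    have hcard := Multiset.card_pos_iff_exists_mem.2 ⟨ρ₀, hρ₀⟩
    have hdeg : j + 2 ≤ g.natDegree := by
      have := card_roots' (Polynomial.derivative^[j + 1] g)
      rw [natDegree_iterate_derivative_eq] at this
      omega
    obtain ⟨s, hs, hmax⟩ := Multiset.exists_max_image id (Multiset.card_pos.1 hcard)
    -- At the largest root `s` of `g^(j+1)`, Leibniz gives `((X - r) g)^(j+1) s = (j+1) g^(j) s`,
    -- which is `≤ 0`, yet `> 0` if all roots of `((X - r) g)^(j+1)` are `< s`.
    have hA : (Polynomial.derivative^[j] g).eval s ≤ 0 := by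
      refine (hg.iterate_derivative j).eval_nonpos_of_max_root_derivative
        (leadingCoeff_iterate_derivative_pos hlc (by omega)) ?_ ?_ <;>
        rwa [← Function.iterate_succ_apply' Polynomial.derivative]
    have hF : 0 < (Polynomial.derivative^[j + 1] ((X - C r) * g)).eval s := by
      have hlcF : ((X - C r) * g).leadingCoeff = g.leadingCoeff := by
        rw [leadingCoeff_mul, (monic_X_sub_C r).leadingCoeff, one_mul]
      have hdegF : ((X - C r) * g).natDegree = g.natDegree + 1 := by
        rw [natDegree_mul (X_sub_C_ne_zero r) (leadingCoeff_ne_zero.1 hlc.ne'),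
          natDegree_X_sub_C, add_comm]
      refine (((Splits.X_sub_C r).mul hg).iterate_derivative _).eval_pos_of_roots_lt
        (leadingCoeff_iterate_derivative_pos (hlcF ▸ hlc) (by omega)) fun ρ hρ => ?_
      exact (h ρ hρ).trans_le (hcρ₀.trans (hmax ρ₀ hρ₀))
    rw [iterate_derivative_X_sub_C_mul, eval_add, eval_mul, eval_mul,
      (isRoot_of_mem_roots hs).eq_zero, eval_natCast] at hF
    have : (0 : ℝ) < (j + 1 : ℕ) := by positivity
    nlinarith

end Polynomial

theorem Multiset.esymm_pos_s16 {R : Type*} [CommSemiring R] [PartialOrder R] [IsStrictOrderedRing R]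
    {Z : Multiset R} (hZ : ∀ z ∈ Z, 0 < z) {l : ℕ} (hl : l ≤ Multiset.card Z) :
    0 < Z.esymm l := by
  have hprod : ∀ t ∈ Z.powersetCard l, 0 < t.prod := fun t ht =>
    Multiset.prod_pos fun z hz => hZ z (Multiset.mem_of_le (Multiset.mem_powersetCard.1 ht).1 hz)
  obtain ⟨t, ht⟩ := Multiset.card_pos_iff_exists_mem.1
    (by rw [Multiset.card_powersetCard]; exact Nat.choose_pos hl)
  calc 0 < t.prod := hprod t ht
    _ ≤ Z.esymm l := Multiset.single_le_sum (fun x hx => by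
        obtain ⟨t', ht', rfl⟩ := Multiset.mem_map.1 hx
        exact (hprod t' ht').le) _ (Multiset.mem_map_of_mem _ ht)

noncomputable def prodXAddC (Z : Multiset ℝ) : ℝ[X] := (Z.map fun z => X + C z).prod

theorem prodXAddC_monic (Z : Multiset ℝ) : (prodXAddC Z).Monic :=
  monic_multiset_prod_of_monic _ _ fun z _ => monic_X_add_C z

theorem prodXAddC_splits (Z : Multiset ℝ) : (prodXAddC Z).Splits :=
  Splits.multisetProd fun f hf => by
    obtain ⟨z, -, rfl⟩ := Multiset.mem_map.1 hf
    exact Splits.X_add_C z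

theorem natDegree_prodXAddC (Z : Multiset ℝ) : (prodXAddC Z).natDegree = Multiset.card Z := by
  rw [prodXAddC, natDegree_multiset_prod_of_monic _ fun f hf => ?_]
  · simp
  · obtain ⟨z, -, rfl⟩ := Multiset.mem_map.1 hf
    exact monic_X_add_C z

theorem coeff_iterate_derivative_prodXAddC (Z : Multiset ℝ) {i j : ℕ}
    (h : i + j ≤ Multiset.card Z) :
    (derivative^[j] (prodXAddC Z)).coeff i =
      (i + j).descFactorial j * Z.esymm (Multiset.card Z - (i + j)) := by
  rw [coeff_iterate_derivative, prodXAddC, Multiset.prod_X_add_C_coeff Z h, nsmul_eq_mul]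

def InGardingCone (k : ℕ) (Z : Multiset ℝ) : Prop :=
  ∀ l, 1 ≤ l → l ≤ k → 0 < Z.esymm l

theorem gammaK_iff_inGardingCone {n k : ℕ} {x : Fin n → ℝ} :
    GammaK n k x ↔ InGardingCone k (univ.val.map x) := by
  simp only [GammaK, InGardingCone, esymm, Finset.esymm_map_val]

namespace InGardingCone

variable {k : ℕ} {Z : Multiset ℝ}

theorem le_card (hZ : InGardingCone k Z) : k ≤ Multiset.card Z := by
  by_contra! h
  have := hZ k (by omega) le_rfl
  rw [Multiset.esymm, Multiset.powersetCard_eq_empty _ h] at this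
  simp at this

theorem roots_iterate_derivative_neg (hZ : InGardingCone k Z) :
    ∀ ρ ∈ (derivative^[Multiset.card Z - k] (prodXAddC Z)).roots, ρ < 0 := by
  have hk := hZ.le_card
  have hcoeff : ∀ i, i ≤ k →
      0 < (derivative^[Multiset.card Z - k] (prodXAddC Z)).coeff i := by
    intro i hi
    rw [coeff_iterate_derivative_prodXAddC Z (by omega)]
    refine mul_pos (by exact_mod_cast Nat.descFactorial_pos.2 (Nat.le_add_left _ _)) ?_
    rcases Nat.eq_zero_or_pos (Multiset.card Z - (i + (Multiset.card Z - k))) with h0 | h0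
    · simp [h0, Multiset.esymm, Multiset.powersetCard_zero_left]
    · exact hZ _ h0 (by omega)
  intro ρ hρ
  by_contra! hρ0
  refine (eval_pos_of_coeff_nonneg (fun i => ?_) (hcoeff 0 (Nat.zero_le _)) hρ0).ne'
    (isRoot_of_mem_roots hρ).eq_zero
  rcases le_or_gt i k with hi | hi
  · exact (hcoeff i hi).le
  · rw [coeff_iterate_derivative,
      coeff_eq_zero_of_natDegree_lt (by rw [natDegree_prodXAddC]; omega), smul_zero]

theorem of_roots_iterate_derivative_neg {j : ℕ}
    (h : ∀ ρ ∈ (derivative^[j] (prodXAddC Z)).roots, ρ < 0) :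
    InGardingCone (Multiset.card Z - j) Z := by
  intro l hl1 hl
  set G := derivative^[j] (prodXAddC Z)
  have hdeg : G.natDegree = Multiset.card Z - j := by
    rw [natDegree_iterate_derivative_eq, natDegree_prodXAddC]
  have hlc : 0 < G.leadingCoeff := leadingCoeff_iterate_derivative_pos
    (by rw [(prodXAddC_monic Z).leadingCoeff]; exact one_pos) (by rw [natDegree_prodXAddC]; omega)
  have hsplit : G.Splits := (prodXAddC_splits Z).iterate_derivative j
  have hvieta := coeff_eq_esymm_roots_of_splits hsplit (k := Multiset.card Z - j - l) (by omega)
  rw [hdeg, mul_assoc, ← Multiset.esymm_neg,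
    show Multiset.card Z - j - (Multiset.card Z - j - l) = l by omega,
    coeff_iterate_derivative_prodXAddC Z (by omega),
    show Multiset.card Z - (Multiset.card Z - j - l + j) = l by omega] at hvieta
  have hpos : 0 < G.leadingCoeff * (G.roots.map Neg.neg).esymm l := by
    refine mul_pos hlc (Multiset.esymm_pos_s16 (fun z hz => ?_) ?_)
    · obtain ⟨ρ, hρ, rfl⟩ := Multiset.mem_map.1 hz
      exact neg_pos.2 (h ρ hρ)
    · rw [Multiset.card_map, splits_iff_card_roots.1 hsplit, hdeg]; exact hl
  rw [← hvieta] at hpos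
  exact pos_of_mul_pos_right hpos (by positivity)

theorem erase (hZ : InGardingCone k Z) {a : ℝ} (ha : a ∈ Z) :
    InGardingCone (k - 1) (Z.erase a) := by
  have hk := hZ.le_card
  have hcard : Multiset.card (Z.erase a) = Multiset.card Z - 1 :=
    Multiset.card_erase_of_mem ha
  have hfactor : prodXAddC Z = (X - C (-a)) * prodXAddC (Z.erase a) := by
    rw [prodXAddC, prodXAddC, ← Multiset.cons_erase ha, Multiset.map_cons, Multiset.prod_cons,
      Multiset.erase_cons_head, map_neg, sub_neg_eq_add]
  have hroots := (prodXAddC_splits _).roots_iterate_derivative_lt_of_X_sub_C_mul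
    (by rw [(prodXAddC_monic _).leadingCoeff]; exact one_pos) (-a) _
    (hfactor ▸ hZ.roots_iterate_derivative_neg)
  intro l hl1 hl
  exact of_roots_iterate_derivative_neg hroots l hl1 (by omega)

theorem sum_pos {W V : Multiset ℝ} (hWV : InGardingCone k (W + V))
    (hW : Multiset.card W < k) : 0 < V.sum := by
  induction W using Multiset.induction_on generalizing k with
  | empty =>
    have := hWV 1 le_rfl (by simp at hW; omega)
    simpa [Multiset.esymm, Multiset.powersetCard_one] using this
  | cons a W ih =>
    have := hWV.erase (a := a) (by simp)
    rw [Multiset.cons_add, Multiset.erase_cons_head] at this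
    exact ih this (by simp at hW; omega)

end InGardingCone

theorem Finset.exists_univ_val_map_eq_cons_cons {ι α : Type*} [Fintype ι] [DecidableEq ι]
    (f : ι → α) {i j : ι} (hij : i ≠ j) :
    ∃ W : Multiset α, Finset.univ.val.map f = f i ::ₘ f j ::ₘ W ∧
      Multiset.card W = Fintype.card ι - 2 := by
  have hj : j ∈ Finset.univ.val.erase i :=
    (Multiset.mem_erase_of_ne hij.symm).2 (Finset.mem_univ _)
  refine ⟨((Finset.univ.val.erase i).erase j).map f, ?_, ?_⟩
  · rw [← Multiset.map_cons, ← Multiset.map_cons, Multiset.cons_erase hj,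
      Multiset.cons_erase (Finset.mem_univ _)]
  · rw [Multiset.card_map, Multiset.card_erase_of_mem hj,
      Multiset.card_erase_of_mem (Finset.mem_univ _), Finset.card_val, Finset.card_univ]
    simp only [Nat.pred_eq_sub_one]
    omega

theorem Fin.univ_val_map_append {α : Type*} {n m : ℕ} (u : Fin n → α) (v : Fin m → α) :
    Finset.univ.val.map (Fin.append u v) = Finset.univ.val.map u + Finset.univ.val.map v := by
  simp only [Fin.univ_val_map, List.ofFn_fin_append, Multiset.coe_add]

/-- If (λ, y) ∈ Γ_{n-1}^{n+m}, λ decreasing, Σ yᵢ = a₁ ≥ 0, and λₙ < −λ₁/(n−1),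
then λ_{n-1} > λ₁/(n−1) − a₁; in particular λ_{n-1} > 0 once λ₁ > (n−1)a₁. -/
theorem second_smallest_positive (n m : ℕ) (hn : 2 ≤ n)
    (lam : Fin n → ℝ) (y : Fin m → ℝ)
    (hG : GammaK (n + m) (n - 1) (Fin.append lam y))
    (a1 : ℝ) (ha : (∑ i : Fin m, y i) = a1)
    (hln : lam ⟨n - 1, by omega⟩ < -(lam ⟨0, by omega⟩ / ((n : ℝ) - 1))) :
    lam ⟨n - 2, by omega⟩ > lam ⟨0, by omega⟩ / ((n : ℝ) - 1) - a1 ∧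
      (lam ⟨0, by omega⟩ > ((n : ℝ) - 1) * a1 → 0 < lam ⟨n - 2, by omega⟩) := by
  obtain ⟨W, hW, hWcard⟩ := Finset.exists_univ_val_map_eq_cons_cons lam
    (i := ⟨n - 2, by omega⟩) (j := ⟨n - 1, by omega⟩) (by simp [Fin.ext_iff]; omega)
  have hcone : InGardingCone (n - 1)
      (W + (lam ⟨n - 2, by omega⟩ ::ₘ lam ⟨n - 1, by omega⟩ ::ₘ univ.val.map y)) := by
    rw [gammaK_iff_inGardingCone, Fin.univ_val_map_append, hW] at hG
    simpa only [Multiset.cons_add, Multiset.add_cons] using hG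
  have hsum := hcone.sum_pos (by rw [hWcard, Fintype.card_fin]; omega)
  rw [Multiset.sum_cons, Multiset.sum_cons, ← Finset.sum_eq_multiset_sum, ha] at hsum
  have hn1 : (0 : ℝ) < n - 1 := by
    have : (2 : ℝ) ≤ n := by exact_mod_cast hn
    linarith
  refine ⟨by linarith, fun h0 => ?_⟩
  have : a1 < lam ⟨0, by omega⟩ / ((n : ℝ) - 1) := (lt_div_iff₀ hn1).2 (by linarith)
  linarith
end
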